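/- arXiv:1905.09937 — 7 statements merged into one kernel-verified Lean document; each statement's English description precedes it below -/
import Mathlib

section
/- Suppose α, β > 0 satisfy: (1) αβ ≥ C := max_{y₁ ≤ y ≤ y₃} g′(y); (2) there exist m₁, m₂ ∈ ℝ with m₁ < y₁ < m₂ and g′(m₁) = g′(m₂) = −αβ; (3) −(C/α)(t₂ − t₁) − β(sin t₂ − sin t₁) + m₁ ≥ m₂, where 0 < t₁ ≤ t₂ ≤ 2π satisfy cos t₁ = cos t₂ = −C/(αβ). Then every continuously differentiable solution y : [0,2π] → ℝ of the ODE ẏ(t) = −(1/α)g′(y(t)) − β cos t with y₁ ≤ y(0) ≤ y₃ satisfies y(2π) ≥ m₂ (so the trajectory x(t) = y(t) + β sin t of the time-varying problem escapes the spurious local minimum and ends above m₂). -/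
open Set Filter Topology

noncomputable section

lemma barrier_lemma (f : ℝ → ℝ) (a b c : ℝ) (hab : a ≤ b)
    (hf : ContinuousOn f (Icc a b)) (ha : c ≤ f a)
    (hcross : ∀ s ∈ Ico a b, f s = c → ∃ d, HasDerivAt f d s ∧ 0 < d) :
    ∀ x ∈ Icc a b, c ≤ f x := by
  have key : ∀ x ∈ Ico a b, c ≤ f x := by
    by_contra h
    push_neg at h
    obtain ⟨x₀, hx₀, hfx₀⟩ := h
    have hax₀ : a < x₀ := by
      rcases eq_or_lt_of_le hx₀.1 with h | h
      · exfalso; rw [← h] at hfx₀; linarith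
      · exact h
    have hx₀b : x₀ < b := hx₀.2
    set S := {s | s ∈ Icc a x₀ ∧ c ≤ f s} with hSdef
    have hSne : S.Nonempty := ⟨a, ⟨le_refl a, le_of_lt hax₀⟩, ha⟩
    have hSbdd : BddAbove S := ⟨x₀, fun s hs => hs.1.2⟩
    have hSclosed : IsClosed S := by
      have hSeq : S = Icc a x₀ ∩ f ⁻¹' (Ici c) := by
        ext s; simp only [hSdef, mem_setOf_eq, mem_inter_iff, mem_preimage, mem_Ici]
      rw [hSeq]
      exact (hf.mono (Icc_subset_Icc le_rfl hx₀b.le)).preimage_isClosed_of_isClosed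
        isClosed_Icc isClosed_Ici
    have hσmem : sSup S ∈ S := hSclosed.csSup_mem hSne hSbdd
    set σ := sSup S with hσdef
    have hσx₀ : σ < x₀ := by
      rcases eq_or_lt_of_le hσmem.1.2 with h | h
      · exfalso; have := hσmem.2; rw [h] at this; linarith
      · exact h
    have hσab : σ ∈ Icc a b := ⟨hσmem.1.1, le_trans hσmem.1.2 hx₀b.le⟩
    have hgt : ∀ s ∈ Ioc σ x₀, f s < c := by
      intro s hs
      by_contra h'
      push_neg at h'
      have hsS : s ∈ S := ⟨⟨le_trans hσmem.1.1 hs.1.le, hs.2⟩, h'⟩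
      have := le_csSup hSbdd hsS
      exact absurd this (not_le.mpr hs.1)
    have hne : NeBot (𝓝[Ioc σ x₀] σ) := by
      rw [← mem_closure_iff_nhdsWithin_neBot, closure_Ioc (ne_of_lt hσx₀)]
      exact ⟨le_refl σ, hσx₀.le⟩
    have hsub : Ioc σ x₀ ⊆ Icc a b :=
      fun s hs => ⟨le_trans hσmem.1.1 hs.1.le, le_trans hs.2 hx₀b.le⟩
    have hfσ : f σ = c := by
      refine le_antisymm ?_ hσmem.2
      have htd : Tendsto f (𝓝[Ioc σ x₀] σ) (𝓝 (f σ)) :=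
        (hf σ hσab).mono_left (nhdsWithin_mono σ hsub)
      exact le_of_tendsto htd
        (eventually_mem_nhdsWithin.mono (fun s hs => (hgt s hs).le))
    obtain ⟨d, hd, hdpos⟩ := hcross σ ⟨hσmem.1.1, lt_trans hσx₀ hx₀b⟩ hfσ
    have hslope : Tendsto (slope f σ) (𝓝[≠] σ) (𝓝 d) :=
      hasDerivAt_iff_tendsto_slope.mp hd
    have hev : ∀ᶠ s in 𝓝[≠] σ, 0 < slope f σ s :=
      hslope.eventually (eventually_gt_nhds hdpos)
    have hle : 𝓝[Ioc σ x₀] σ ≤ 𝓝[≠] σ :=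
      nhdsWithin_mono σ (fun s hs => ne_of_gt hs.1)
    obtain ⟨s, hs1, hs2⟩ := ((hev.filter_mono hle).and eventually_mem_nhdsWithin).exists
    have hsσ : 0 < s - σ := sub_pos.2 hs2.1
    rw [slope_def_field] at hs1
    have h1 : 0 < f s - f σ := by
      have := mul_pos hs1 hsσ
      rwa [div_mul_cancel₀ _ (ne_of_gt hsσ)] at this
    have := hgt s hs2
    rw [hfσ] at h1
    linarith
  intro x hx
  rcases lt_or_eq_of_le hx.2 with h | h
  · exact key x ⟨hx.1, h⟩
  · subst h
    rcases eq_or_lt_of_le hab with h' | h'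
    · rw [← h']; exact ha
    · have hne : NeBot (𝓝[Ico a x] x) := by
        rw [← mem_closure_iff_nhdsWithin_neBot, closure_Ico (ne_of_lt h')]
        exact ⟨h'.le, le_refl x⟩
      have htd : Tendsto f (𝓝[Ico a x] x) (𝓝 (f x)) :=
        (hf x hx).mono_left (nhdsWithin_mono x Ico_subset_Icc_self)
      exact ge_of_tendsto htd
        (eventually_mem_nhdsWithin.mono (fun s hs => key s hs))

/-- Proposition 1: sufficient conditions on `α, β` for the absence of spurious local
trajectories of the time-varying problem `inf_x g(x − β sin t)`.  Written in the
variable `y := x − β sin t`, which solves `ẏ = −(1/α)g′(y) − β cos t`: any such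
trajectory started in `[y₁, y₃]` satisfies `y(2π) ≥ m₂`, i.e. it escapes the spurious
local minimum and ends above `m₂`. -/
theorem no_spurious_trajectory_unidimensional
    (g : ℝ → ℝ) (hg : ContDiff ℝ 2 g)
    (hcoercive : Tendsto g (cocompact ℝ) atTop)
    (y₁ y₂ y₃ : ℝ) (h12 : y₁ < y₂) (h23 : y₂ < y₃)
    (hstat : ∀ y : ℝ, deriv g y = 0 ↔ (y = y₁ ∨ y = y₂ ∨ y = y₃))
    (hmin1 : IsLocalMin g y₁) (hmax2 : IsLocalMax g y₂) (hmin3 : IsLocalMin g y₃)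
    (hval : g y₃ < g y₁)
    (α β C m₁ m₂ t₁ t₂ : ℝ) (hα : 0 < α) (hβ : 0 < β)
    -- `C := max_{y₁ ≤ y ≤ y₃} g′(y)`
    (hC : IsGreatest (deriv g '' Icc y₁ y₃) C)
    -- condition (1): `αβ ≥ C`
    (hcond1 : C ≤ α * β)
    -- condition (2): `m₁ < y₁ < m₂` and `g′(m₁) = g′(m₂) = −αβ`
    (hm1 : m₁ < y₁) (hm2 : y₁ < m₂)
    (hgm1 : deriv g m₁ = -(α * β)) (hgm2 : deriv g m₂ = -(α * β))
    -- `0 < t₁ ≤ t₂ ≤ 2π` with `cos t₁ = cos t₂ = −C/(αβ)`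
    (ht1 : 0 < t₁) (ht12 : t₁ ≤ t₂) (ht2 : t₂ ≤ 2 * Real.pi)
    (hcos1 : Real.cos t₁ = -C / (α * β)) (hcos2 : Real.cos t₂ = -C / (α * β))
    -- condition (3)
    (hcond3 : m₂ ≤ -(C / α) * (t₂ - t₁) - β * (Real.sin t₂ - Real.sin t₁) + m₁)
    -- a continuously differentiable solution of the ODE on `[0, 2π]`
    (y : ℝ → ℝ)
    (hy : ∀ t ∈ Icc (0 : ℝ) (2 * Real.pi),
      HasDerivWithinAt y (-(1 / α) * deriv g (y t) - β * Real.cos t)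
        (Icc 0 (2 * Real.pi)) t)
    (hy0 : y 0 ∈ Icc y₁ y₃) :
    m₂ ≤ y (2 * Real.pi) := by
  have hπ : (0:ℝ) < Real.pi := Real.pi_pos
  set T := 2 * Real.pi with hT
  have hT0 : (0:ℝ) < T := by positivity
  -- basic facts about g
  have hgdiff : Differentiable ℝ g := hg.differentiable (by norm_num)
  have hgd_cont : Continuous (deriv g) := hg.continuous_deriv (by norm_num)
  have hd1 : deriv g y₁ = 0 := (hstat y₁).mpr (Or.inl rfl)
  have hd3 : deriv g y₃ = 0 := (hstat y₃).mpr (Or.inr (Or.inr rfl))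
  have hC0 : 0 ≤ C := by
    have : deriv g y₁ ∈ deriv g '' Icc y₁ y₃ :=
      ⟨y₁, ⟨le_refl y₁, by linarith⟩, rfl⟩
    have := hC.2 this
    rwa [hd1] at this
  have hCle : ∀ z ∈ Icc y₁ y₃, deriv g z ≤ C := fun z hz => hC.2 ⟨z, hz, rfl⟩
  -- deriv g is ≤ 0 on [m₁, y₁)
  have hneg_left : ∀ z, m₁ ≤ z → z < y₁ → deriv g z ≤ 0 := by
    intro z hz1 hz2
    by_contra h
    push_neg at h
    have h0 : (0:ℝ) ∈ Icc (deriv g m₁) (deriv g z) := by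
      rw [hgm1]; constructor <;> nlinarith
    obtain ⟨w, hw, hw0⟩ := intermediate_value_Icc hz1 (hgd_cont.continuousOn) h0
    rcases (hstat w).mp hw0 with h' | h' | h' <;> subst h' <;> linarith [hw.2]
  -- m₂ < y₃
  have hm2y3 : m₂ < y₃ := by
    have hat : Tendsto g atTop atTop := by
      refine hcoercive.mono_left ?_
      rw [cocompact_eq_atBot_atTop]
      exact le_sup_right
    obtain ⟨z, hz1, hz2⟩ :=
      ((hat.eventually_ge_atTop (g y₃ + 1)).and (eventually_gt_atTop (max m₂ y₃))).exists
    have hzy₃ : y₃ < z := lt_of_le_of_lt (le_max_right _ _) hz2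
    have hzm₂ : m₂ < z := lt_of_le_of_lt (le_max_left _ _) hz2
    obtain ⟨c, hc, hcval⟩ := exists_deriv_eq_slope g hzy₃
      (hgdiff.continuous.continuousOn) (hgdiff.differentiableOn)
    have hcpos : 0 < deriv g c := by
      rw [hcval]
      apply div_pos <;> linarith
    by_contra h
    push_neg at h
    rcases eq_or_lt_of_le h with h' | h'
    · rw [h', hgm2] at hd3; nlinarith
    · -- y₃ < m₂ ; IVT between m₂ and c, both > y₃
      have hm2neg : deriv g m₂ < 0 := by rw [hgm2]; nlinarith
      rcases le_total m₂ c with hmc | hmc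
      · have h0 : (0:ℝ) ∈ Icc (deriv g m₂) (deriv g c) := ⟨hm2neg.le, hcpos.le⟩
        obtain ⟨w, hw, hw0⟩ := intermediate_value_Icc hmc hgd_cont.continuousOn h0
        rcases (hstat w).mp hw0 with h'' | h'' | h'' <;> subst h'' <;>
          linarith [hw.1]
      · have h0 : (0:ℝ) ∈ Icc (deriv g m₂) (deriv g c) := ⟨hm2neg.le, hcpos.le⟩
        obtain ⟨w, hw, hw0⟩ := intermediate_value_Icc' hmc hgd_cont.continuousOn h0
        rcases (hstat w).mp hw0 with h'' | h'' | h'' <;> subst h'' <;>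
          linarith [hw.1, hc.1]
  -- t₂ < 2π
  have hαβ : 0 < α * β := by positivity
  have ht2' : t₂ < T := by
    rcases eq_or_lt_of_le ht2 with h | h
    · exfalso
      rw [h, hT, Real.cos_two_pi] at hcos2
      have h1 : 0 ≤ C / (α * β) := div_nonneg hC0 hαβ.le
      rw [neg_div] at hcos2
      linarith
    · exact h
  -- cos s < 1 for s ∈ (0, T)
  have hcoslt : ∀ s : ℝ, 0 < s → s < T → Real.cos s < 1 := by
    intro s hs0 hsT
    rcases lt_or_eq_of_le (Real.cos_le_one s) with h | h
    · exact h
    · exfalso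
      have := (Real.cos_eq_one_iff_of_lt_of_lt (by linarith [hT ▸ hsT, hπ])
        (by rw [← hT]; exact hsT)).mp h
      linarith
  -- continuity of y
  have hy_cont : ContinuousOn y (Icc 0 T) := fun t ht =>
    (hy t ht).continuousWithinAt
  -- derivative at interior points
  have hy_deriv : ∀ t, 0 < t → t < T →
      HasDerivAt y (-(1 / α) * deriv g (y t) - β * Real.cos t) t := by
    intro t h0 h1
    exact (hy t ⟨h0.le, h1.le⟩).hasDerivAt (Icc_mem_nhds h0 h1)
  -- crossing derivative positivity at points where y s = m with deriv g m = -(αβ)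
  have hcrossval : ∀ m : ℝ, deriv g m = -(α * β) → ∀ s, 0 < s → s < T → y s = m →
      ∃ d, HasDerivAt y d s ∧ 0 < d := by
    intro m hm s hs0 hsT hys
    refine ⟨-(1 / α) * deriv g (y s) - β * Real.cos s, hy_deriv s hs0 hsT, ?_⟩
    rw [hys, hm]
    have hc := hcoslt s hs0 hsT
    have hα' : α ≠ 0 := ne_of_gt hα
    have : -(1 / α) * -(α * β) = β := by field_simp
    rw [this]
    have hp := mul_pos hβ (sub_pos.mpr hc)
    linarith
  -- Step 1: y ≥ m₁ on [0, t₂]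
  have hstep1 : ∀ x ∈ Icc 0 t₂, m₁ ≤ y x := by
    apply barrier_lemma y 0 t₂ m₁ (by linarith)
      (hy_cont.mono (Icc_subset_Icc le_rfl ht2'.le))
    · linarith [hy0.1]
    · intro s hs hys
      have hs0 : 0 < s := by
        rcases eq_or_lt_of_le hs.1 with h | h
        · exfalso; rw [← h] at hys; linarith [hy0.1, hys ▸ hy0.1]
        · exact h
      exact hcrossval m₁ hgm1 s hs0 (lt_of_lt_of_le hs.2 ht2'.le) hys
  -- Step 2: ∃ s ∈ [t₁, t₂], y s ≥ m₂
  have hstep2 : ∃ s ∈ Icc t₁ t₂, m₂ ≤ y s := by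
    by_contra h
    push_neg at h
    -- w(t) = y t + (C/α) t + β sin t is monotone on [t₁, t₂]
    set w : ℝ → ℝ := fun t => y t + (C / α) * t + β * Real.sin t with hw
    have hsubI : Icc t₁ t₂ ⊆ Icc 0 T := Icc_subset_Icc ht1.le ht2
    have hwc : ContinuousOn w (Icc t₁ t₂) := by
      apply ContinuousOn.add
      apply ContinuousOn.add
      · exact hy_cont.mono hsubI
      · exact (continuous_const.mul continuous_id).continuousOn
      · exact (continuous_const.mul Real.continuous_sin).continuousOn
    have hwd : ∀ x ∈ interior (Icc t₁ t₂),
        HasDerivAt w (-(1 / α) * deriv g (y x) - β * Real.cos x + C / α + β * Real.cos x) x := by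
      intro x hx
      rw [interior_Icc] at hx
      have h0 : 0 < x := lt_trans ht1 hx.1
      have h1 : x < T := lt_trans hx.2 ht2'
      have hh := ((hy_deriv x h0 h1).add ((hasDerivAt_id x).const_mul (C / α))).add
        ((Real.hasDerivAt_sin x).const_mul β)
      simpa [hw, Pi.add_def] using hh
    have hmono : MonotoneOn w (Icc t₁ t₂) := by
      apply monotoneOn_of_deriv_nonneg (convex_Icc t₁ t₂) hwc
      · intro x hx
        exact (hwd x hx).differentiableAt.differentiableWithinAt
      · intro x hx
        rw [(hwd x hx).deriv]
        rw [interior_Icc] at hx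
        have hyx1 : m₁ ≤ y x := hstep1 x ⟨by linarith [hx.1], hx.2.le⟩
        have hyx2 : y x < m₂ := h x ⟨hx.1.le, hx.2.le⟩
        have hgyx : deriv g (y x) ≤ C := by
          rcases lt_or_ge (y x) y₁ with h' | h'
          · linarith [hneg_left (y x) hyx1 h']
          · exact hCle (y x) ⟨h', by linarith⟩
        have hdn : 0 ≤ (C - deriv g (y x)) / α := div_nonneg (by linarith) hα.le
        have heq : -(1 / α) * deriv g (y x) - β * Real.cos x + C / α + β * Real.cos x
            = (C - deriv g (y x)) / α := by
          field_simp
          ring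
        rw [heq]
        exact hdn

    have hkey := hmono ⟨le_refl t₁, ht12⟩ ⟨ht12, le_refl t₂⟩ ht12
    have hyt1 : m₁ ≤ y t₁ := hstep1 t₁ ⟨ht1.le, ht12⟩
    have hyt2 : y t₂ < m₂ := h t₂ ⟨ht12, le_refl t₂⟩
    simp only [hw] at hkey
    linarith [hkey]
  obtain ⟨s, hs, hys⟩ := hstep2
  -- Step 3: barrier at m₂ from s to T
  have hsT : s ≤ T := le_trans hs.2 ht2
  have hfinal := barrier_lemma y s T m₂ hsT
    (hy_cont.mono (Icc_subset_Icc (by linarith [hs.1]) le_rfl)) hys ?_ T ⟨hsT, le_refl T⟩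
  · exact hfinal
  · intro σ hσ hyσ
    have hσ0 : 0 < σ := lt_of_lt_of_le ht1 (le_trans hs.1 hσ.1)
    exact hcrossval m₂ hgm2 σ hσ0 hσ.2 hyσ
end
end

section
/- Let g : ℝ → ℝ be continuously differentiable, let α, β > 0, and let m ∈ ℝ satisfy g′(m) = −αβ. If y : [0,2π] → ℝ is a continuously differentiable solution of ẏ(t) = −(1/α)g′(y(t)) − β cos t with y(0) > m, then y(t) ≥ m for all t ∈ [0,2π]. -/
open Set Filter Topology

noncomputable section

/-- Barrier lemma: if `g′(m) = −αβ` then any continuously differentiable solution of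
`ẏ(t) = −(1/α)g′(y(t)) − β cos t` on `[0, 2π]` with `y(0) > m` satisfies `y(t) ≥ m`
for all `t ∈ [0, 2π]`. -/
theorem barrier_level_lemma
    (g : ℝ → ℝ) (hg : ContDiff ℝ 1 g)
    (α β m : ℝ) (hα : 0 < α) (hβ : 0 < β)
    (hgm : deriv g m = -(α * β))
    (y : ℝ → ℝ)
    (hy : ∀ t ∈ Icc (0 : ℝ) (2 * Real.pi),
      HasDerivWithinAt y (-(1 / α) * deriv g (y t) - β * Real.cos t)
        (Icc 0 (2 * Real.pi)) t)
    (hy0 : m < y 0) :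
    ∀ t ∈ Icc (0 : ℝ) (2 * Real.pi), m ≤ y t := by
  by_contra hcon
  push_neg at hcon
  obtain ⟨t₁, ht₁, hyt₁⟩ := hcon
  have hycont : ContinuousOn y (Icc 0 (2 * Real.pi)) :=
    fun t ht => (hy t ht).continuousWithinAt
  set S : Set ℝ := Icc 0 t₁ ∩ y ⁻¹' (Ici m) with hSdef
  have h0S : (0 : ℝ) ∈ S := ⟨⟨le_refl 0, ht₁.1⟩, le_of_lt hy0⟩
  have hSI : S ⊆ Icc 0 (2 * Real.pi) := fun t ht => ⟨ht.1.1, ht.1.2.trans ht₁.2⟩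
  have hbdd : BddAbove S := ⟨t₁, fun t ht => ht.1.2⟩
  have hclosed : IsClosed S :=
    (hycont.mono (fun t ht => ⟨ht.1, ht.2.trans ht₁.2⟩)).preimage_isClosed_of_isClosed
      isClosed_Icc isClosed_Ici
  set t₀ := sSup S with ht₀def
  have ht₀S : t₀ ∈ S := hclosed.csSup_mem ⟨0, h0S⟩ hbdd
  have ht₀I : t₀ ∈ Icc 0 (2 * Real.pi) := hSI ht₀S
  have ht₀le : t₀ ≤ t₁ := ht₀S.1.2
  have ht₀lt : t₀ < t₁ := by
    rcases eq_or_lt_of_le ht₀le with h | h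
    · exact absurd ht₀S.2 (by simp [h, not_le.mpr hyt₁])
    · exact h
  -- all points in (t₀, t₁] have y t < m
  have hbelow : ∀ t ∈ Ioc t₀ t₁, y t < m := by
    intro t ht
    by_contra hge
    push_neg at hge
    have : t ∈ S := ⟨⟨ht₀I.1.trans ht.1.le, ht.2⟩, hge⟩
    exact absurd (le_csSup hbdd this) (not_le.mpr ht.1)
  have hIocsub : Ioc t₀ t₁ ⊆ Icc 0 (2 * Real.pi) :=
    fun t ht => ⟨ht₀I.1.trans ht.1.le, ht.2.trans ht₁.2⟩
  haveI : (𝓝[Ioc t₀ t₁] t₀).NeBot := left_nhdsWithin_Ioc_neBot ht₀lt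
  -- y t₀ = m
  have hyt₀le : y t₀ ≤ m := by
    have htend : Tendsto y (𝓝[Ioc t₀ t₁] t₀) (𝓝 (y t₀)) :=
      (hycont t₀ ht₀I).mono_left (nhdsWithin_mono _ hIocsub)
    refine le_of_tendsto htend ?_
    filter_upwards [self_mem_nhdsWithin] with t ht using (hbelow t ht).le
  have hyt₀ : y t₀ = m := le_antisymm hyt₀le ht₀S.2
  -- t₀ > 0
  have ht₀pos : 0 < t₀ := by
    rcases eq_or_lt_of_le ht₀I.1 with h | h
    · exact absurd hyt₀ (by rw [← h]; exact ne_of_gt hy0)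
    · exact h
  -- the derivative at t₀ is positive
  have hcoslt : Real.cos t₀ < 1 := by
    rcases lt_or_eq_of_le (Real.cos_le_one t₀) with h | h
    · exact h
    · have h0 : t₀ = 0 := (Real.cos_eq_one_iff_of_lt_of_lt
        (by linarith [Real.pi_pos, ht₀I.1]) (lt_of_lt_of_le ht₀lt ht₁.2)).mp h
      exact absurd h0 (ne_of_gt ht₀pos)
  have hderiv := hy t₀ ht₀I
  have hval : -(1 / α) * deriv g (y t₀) - β * Real.cos t₀ = β * (1 - Real.cos t₀) := by
    rw [hyt₀, hgm]
    field_simp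
  rw [hval] at hderiv
  have hcpos : 0 < β * (1 - Real.cos t₀) := by
    have : 0 < 1 - Real.cos t₀ := by linarith
    positivity
  -- but the slope from the right is nonpositive
  rw [hasDerivWithinAt_iff_tendsto_slope] at hderiv
  have hsub : Ioc t₀ t₁ ⊆ Icc 0 (2 * Real.pi) \ {t₀} :=
    fun t ht => ⟨hIocsub ht, ne_of_gt ht.1⟩
  have htend : Tendsto (slope y t₀) (𝓝[Ioc t₀ t₁] t₀) (𝓝 (β * (1 - Real.cos t₀))) :=
    hderiv.mono_left (nhdsWithin_mono _ hsub)
  have hle : β * (1 - Real.cos t₀) ≤ 0 := by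
    refine le_of_tendsto htend ?_
    filter_upwards [self_mem_nhdsWithin] with t ht
    have h1 : y t - y t₀ < 0 := by rw [hyt₀]; linarith [hbelow t ht]
    have h2 : 0 < t - t₀ := by linarith [ht.1]
    have : slope y t₀ t = (y t - y t₀) / (t - t₀) := by
      simp [slope_def_field]
    rw [this]
    exact le_of_lt (div_neg_of_neg_of_pos h1 h2)
  linarith
end
end

section
/- Let y : [0, π/(2ω)] → ℝⁿ be a continuously differentiable solution of ẏ(t) = −(1/α)∇g(y(t)) − βe^{−λt}(−λ sin(ωt) + ω cos(ωt))u. If ‖∇g(x)‖ ≤ C₁ for all x in the closed ball B̄(y(0), R) and 2αω(βe^{−λπ/(2ω)} − R)/π > C₁, then there exists t ∈ [0, π/(2ω)] such that ‖y(t) − y(0)‖ > R. -/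
open Set Filter Metric

noncomputable section

/-- Escape step in the proof of Theorem 3: a solution of
`ẏ(t) = −(1/α)∇g(y(t)) − βe^{−λt}(−λ sin(ωt) + ω cos(ωt))u` on `[0, π/(2ω)]` must exit
the ball `B̄(y(0), R)` if `‖∇g‖ ≤ C₁` on that ball and
`2αω(βe^{−λπ/(2ω)} − R)/π > C₁`. -/
theorem escape_from_ball
    {n : ℕ} (g : EuclideanSpace ℝ (Fin n) → ℝ) (u : EuclideanSpace ℝ (Fin n))
    (α β ω lam R C₁ : ℝ)
    (hα : 0 < α) (hβ : 0 < β) (hω : 0 < ω) (hlam : 0 < lam) (hR : 0 < R) (hC₁ : 0 < C₁)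
    (hg : ContDiff ℝ 1 g) (hu : ‖u‖ = 1)
    (y : ℝ → EuclideanSpace ℝ (Fin n))
    (hyode : ∀ t ∈ Icc (0 : ℝ) (Real.pi / (2 * ω)),
      HasDerivWithinAt y
        ((-(1 / α)) • gradient g (y t)
          - (β * Real.exp (-lam * t)
              * (-lam * Real.sin (ω * t) + ω * Real.cos (ω * t))) • u)
        (Icc 0 (Real.pi / (2 * ω))) t)
    (hgrad : ∀ x : EuclideanSpace ℝ (Fin n), dist x (y 0) ≤ R → ‖gradient g x‖ ≤ C₁)
    (hcond : 2 * α * ω * (β * Real.exp (-lam * Real.pi / (2 * ω)) - R) / Real.pi > C₁) :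
    ∃ t ∈ Icc (0 : ℝ) (Real.pi / (2 * ω)), R < ‖y t - y 0‖ := by
  by_contra hcon
  push_neg at hcon
  set T : ℝ := Real.pi / (2 * ω) with hT
  have hπ : 0 < Real.pi := Real.pi_pos
  have hTpos : 0 < T := by positivity
  have hTmem : T ∈ Icc (0 : ℝ) T := ⟨le_of_lt hTpos, le_refl T⟩
  have h0mem : (0 : ℝ) ∈ Icc (0 : ℝ) T := ⟨le_refl 0, le_of_lt hTpos⟩
  -- auxiliary function w
  set c : ℝ → ℝ := fun t => β * Real.exp (-lam * t) * Real.sin (ω * t) with hc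
  set w : ℝ → EuclideanSpace ℝ (Fin n) := fun t => y t + c t • u with hw
  have hwderiv : ∀ t ∈ Icc (0 : ℝ) T,
      HasDerivWithinAt w ((-(1 / α)) • gradient g (y t)) (Icc 0 T) t := by
    intro t ht
    have hcder : HasDerivAt c
        (β * Real.exp (-lam * t) * (-lam * Real.sin (ω * t) + ω * Real.cos (ω * t))) t := by
      have he : HasDerivAt (fun x : ℝ => Real.exp (-lam * x)) (Real.exp (-lam * t) * (-lam)) t := by
        simpa using ((hasDerivAt_id t).const_mul (-lam)).exp
      have hs : HasDerivAt (fun x : ℝ => Real.sin (ω * x)) (Real.cos (ω * t) * ω) t := by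
        simpa using ((hasDerivAt_id t).const_mul ω).sin
      have := (he.const_mul β).mul hs
      exact this.congr_deriv (by ring)
    have := (hyode t ht).add ((hcder.hasDerivWithinAt).smul_const u)
    exact this.congr_deriv (sub_add_cancel _ _)
  have hbound : ∀ t ∈ Icc (0 : ℝ) T,
      ‖(-(1 / α)) • gradient g (y t)‖ ≤ C₁ / α := by
    intro t ht
    have h1 : ‖gradient g (y t)‖ ≤ C₁ := by
      apply hgrad
      rw [dist_eq_norm]
      exact hcon t ht
    rw [norm_smul]
    have : ‖(-(1 / α) : ℝ)‖ = 1 / α := by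
      rw [norm_neg, Real.norm_eq_abs, abs_of_pos (by positivity)]
    calc ‖(-(1 / α) : ℝ)‖ * ‖gradient g (y t)‖ = ‖gradient g (y t)‖ / α := by
          rw [this]; ring
      _ ≤ C₁ / α := by gcongr
  have hmvt : ‖w T - w 0‖ ≤ (C₁ / α) * ‖T - 0‖ :=
    (convex_Icc 0 T).norm_image_sub_le_of_norm_hasDerivWithin_le hwderiv hbound h0mem hTmem
  -- compute w 0 and w T
  have hc0 : c 0 = 0 := by simp [hc]
  have hcT : c T = β * Real.exp (-lam * T) := by
    have : ω * T = Real.pi / 2 := by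
      rw [hT]; field_simp
    simp [hc, this, Real.sin_pi_div_two]
  have hkey : ‖w T - w 0‖ = ‖y T - y 0 + (β * Real.exp (-lam * T)) • u‖ := by
    rw [hw]
    simp only [hc0, hcT, zero_smul, add_zero]
    congr 1
    abel
  have hlow : β * Real.exp (-lam * T) - R ≤ ‖w T - w 0‖ := by
    rw [hkey]
    have h1 : ‖(β * Real.exp (-lam * T)) • u‖ = β * Real.exp (-lam * T) := by
      rw [norm_smul, hu, mul_one, Real.norm_eq_abs, abs_of_pos (by positivity)]
    have h2 : ‖(β * Real.exp (-lam * T)) • u‖ ≤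
        ‖y T - y 0 + (β * Real.exp (-lam * T)) • u‖ + ‖y T - y 0‖ := by
      have := norm_sub_le (y T - y 0 + (β * Real.exp (-lam * T)) • u) (y T - y 0)
      simpa [add_sub_cancel_left] using this
    have h3 := hcon T hTmem
    rw [h1] at h2
    linarith
  have hTnorm : ‖T - 0‖ = T := by
    rw [sub_zero, Real.norm_eq_abs, abs_of_pos hTpos]
  rw [hTnorm] at hmvt
  -- now arithmetic contradiction
  have hexp : Real.exp (-lam * Real.pi / (2 * ω)) = Real.exp (-lam * T) := by
    rw [hT]; ring_nf
  rw [hexp] at hcond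
  have hTval : C₁ / α * T = C₁ * Real.pi / (2 * α * ω) := by
    rw [hT]; field_simp
  have hcond' : C₁ * Real.pi / (2 * α * ω) < β * Real.exp (-lam * T) - R := by
    rw [gt_iff_lt, lt_div_iff₀ hπ] at hcond
    rw [div_lt_iff₀ (by positivity : (0:ℝ) < 2 * α * ω)]
    nlinarith
  linarith [hlow.trans hmvt]
end
end

section
/- Let y : [s₀, ∞) → ℝⁿ be a continuously differentiable solution of ẏ(t) = −(1/α)∇g(y(t)) − βe^{−λt}(−λ sin(ωt) + ω cos(ωt))u, and let p ∈ ℝⁿ, R > 0, C₂ ∈ ℝ be such that ⟨∇g(p − Rd), d⟩ ≥ C₂ for every unit vector d ∈ ℝⁿ. If ‖y(s₀) − p‖ ≥ R and αβ e^{−λs₀}√(λ² + ω²) < C₂, then ‖y(t) − p‖ ≥ R for all t ≥ s₀. -/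
open Set Filter Metric

noncomputable section

set_option maxHeartbeats 1000000 in
/-- No-return barrier step in the proof of Theorem 3: if the inward derivative of `g`
on the sphere `S(p, R)` is at least `C₂` and `αβe^{−λs₀}√(λ² + ω²) < C₂`, then a
solution of `ẏ(t) = −(1/α)∇g(y(t)) − βe^{−λt}(−λ sin(ωt) + ω cos(ωt))u` on `[s₀, ∞)`
starting outside the ball `B(p, R)` never enters it. -/
theorem no_return_to_ball
    {n : ℕ} (g : EuclideanSpace ℝ (Fin n) → ℝ) (u : EuclideanSpace ℝ (Fin n))
    (α β ω lam : ℝ) (hα : 0 < α) (hβ : 0 < β) (hω : 0 < ω) (hlam : 0 < lam)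
    (hg : ContDiff ℝ 1 g) (hu : ‖u‖ = 1)
    (s₀ : ℝ) (p : EuclideanSpace ℝ (Fin n)) (R C₂ : ℝ) (hR : 0 < R)
    (hC₂ : ∀ dvec : EuclideanSpace ℝ (Fin n), ‖dvec‖ = 1 →
      C₂ ≤ (inner ℝ (gradient g (p - R • dvec)) dvec : ℝ))
    (y : ℝ → EuclideanSpace ℝ (Fin n))
    (hyode : ∀ t : ℝ, s₀ ≤ t → HasDerivAt y
      ((-(1 / α)) • gradient g (y t)
        - (β * Real.exp (-lam * t)
            * (-lam * Real.sin (ω * t) + ω * Real.cos (ω * t))) • u) t)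
    (hinit : R ≤ ‖y s₀ - p‖)
    (hcond : α * β * Real.exp (-lam * s₀) * Real.sqrt (lam ^ 2 + ω ^ 2) < C₂) :
    ∀ t : ℝ, s₀ ≤ t → R ≤ ‖y t - p‖ := by
  -- the velocity vector
  set v : ℝ → EuclideanSpace ℝ (Fin n) := fun t =>
    (-(1 / α)) • gradient g (y t)
      - (β * Real.exp (-lam * t)
          * (-lam * Real.sin (ω * t) + ω * Real.cos (ω * t))) • u with hv
  -- Key pointwise estimate: whenever the trajectory touches the sphere,
  -- the radial velocity is strictly positive.
  have key : ∀ T : ℝ, s₀ ≤ T → ‖y T - p‖ = R →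
      0 < (inner ℝ (v T) (y T - p) : ℝ) := by
    intro T hT hnorm
    set d : EuclideanSpace ℝ (Fin n) := (R⁻¹ : ℝ) • (p - y T) with hd
    have hRne : (R : ℝ) ≠ 0 := ne_of_gt hR
    have hdnorm : ‖d‖ = 1 := by
      have : ‖p - y T‖ = R := by rw [← hnorm, norm_sub_rev]
      rw [hd, norm_smul, this, Real.norm_eq_abs, abs_inv, abs_of_pos hR,
        inv_mul_cancel₀ hRne]
    have hyT : p - R • d = y T := by
      rw [hd, smul_smul, mul_inv_cancel₀ hRne, one_smul]
      abel
    have hCg : C₂ ≤ (inner ℝ (gradient g (y T)) d : ℝ) := by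
      have := hC₂ d hdnorm
      rwa [hyT] at this
    have hsub : y T - p = (-R) • d := by
      rw [hd, smul_smul]
      have h5 : -R * R⁻¹ = (-1 : ℝ) := by field_simp
      rw [h5, neg_one_smul, neg_sub]
    -- inner products
    have h1 : (inner ℝ (gradient g (y T)) (y T - p) : ℝ)
        = -R * (inner ℝ (gradient g (y T)) d : ℝ) := by
      rw [hsub, real_inner_smul_right]
    have h2 : |(inner ℝ u (y T - p) : ℝ)| ≤ R := by
      calc |(inner ℝ u (y T - p) : ℝ)| ≤ ‖u‖ * ‖y T - p‖ := abs_real_inner_le_norm _ _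
        _ = R := by rw [hu, hnorm, one_mul]
    -- bound on the oscillatory coefficient
    have htrig : |(-lam * Real.sin (ω * T) + ω * Real.cos (ω * T))|
        ≤ Real.sqrt (lam ^ 2 + ω ^ 2) := by
      apply Real.abs_le_sqrt
      nlinarith [Real.sin_sq_add_cos_sq (ω * T),
        sq_nonneg (lam * Real.cos (ω * T) + ω * Real.sin (ω * T))]
    set c : ℝ := β * Real.exp (-lam * T)
      * (-lam * Real.sin (ω * T) + ω * Real.cos (ω * T)) with hc
    have hexp : Real.exp (-lam * T) ≤ Real.exp (-lam * s₀) := by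
      apply Real.exp_le_exp.2
      nlinarith
    have hcabs : |c| ≤ β * Real.exp (-lam * s₀) * Real.sqrt (lam ^ 2 + ω ^ 2) := by
      rw [hc, abs_mul, abs_mul, abs_of_pos hβ, abs_of_pos (Real.exp_pos _)]
      apply mul_le_mul (mul_le_mul_of_nonneg_left hexp hβ.le) htrig (abs_nonneg _)
      positivity
    have hexpand : (inner ℝ (v T) (y T - p) : ℝ)
        = (-(1 / α)) * (inner ℝ (gradient g (y T)) (y T - p) : ℝ)
          - c * (inner ℝ u (y T - p) : ℝ) := by
      simp only [hv]
      rw [inner_sub_left, real_inner_smul_left, real_inner_smul_left]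
    rw [hexpand, h1]
    have hterm1 : R * C₂ / α ≤ -(1 / α) * (-R * (inner ℝ (gradient g (y T)) d : ℝ)) := by
      rw [div_le_iff₀ hα]
      have h6 : -(1 / α) * (-R * (inner ℝ (gradient g (y T)) d : ℝ)) * α
          = R * (inner ℝ (gradient g (y T)) d : ℝ) := by field_simp
      rw [h6]
      exact mul_le_mul_of_nonneg_left hCg hR.le
    have hterm2 : c * (inner ℝ u (y T - p) : ℝ)
        ≤ β * Real.exp (-lam * s₀) * Real.sqrt (lam ^ 2 + ω ^ 2) * R := by
      calc c * (inner ℝ u (y T - p) : ℝ) ≤ |c * (inner ℝ u (y T - p) : ℝ)| := le_abs_self _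
        _ = |c| * |(inner ℝ u (y T - p) : ℝ)| := abs_mul _ _
        _ ≤ β * Real.exp (-lam * s₀) * Real.sqrt (lam ^ 2 + ω ^ 2) * R := by
            apply mul_le_mul hcabs h2 (abs_nonneg _)
            positivity
    have hfinal : β * Real.exp (-lam * s₀) * Real.sqrt (lam ^ 2 + ω ^ 2) * R
        < R * C₂ / α := by
      rw [lt_div_iff₀ hα]
      nlinarith [mul_lt_mul_of_pos_left hcond hR]
    linarith
  -- continuity of y on [s₀, ∞)
  have hycont : ∀ t : ℝ, s₀ ≤ t → ContinuousAt y t := fun t ht =>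
    (hyode t ht).continuousAt
  -- main argument by contradiction
  by_contra hcon
  push_neg at hcon
  obtain ⟨t₁, ht₁, hlt⟩ := hcon
  -- the set of times in [s₀, t₁] where the trajectory is (weakly) outside the ball
  set A : Set ℝ := {t ∈ Icc s₀ t₁ | R ≤ ‖y t - p‖} with hA
  have hAne : A.Nonempty := ⟨s₀, ⟨le_refl _, ht₁⟩, hinit⟩
  have hAbdd : BddAbove A := ⟨t₁, fun t ht => ht.1.2⟩
  have hAclosed : IsClosed A := by
    have hyc : ContinuousOn (fun t => ‖y t - p‖) (Icc s₀ t₁) := fun t ht =>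
      (((hycont t ht.1).sub continuousAt_const).norm).continuousWithinAt
    have : A = Icc s₀ t₁ ∩ (fun t => ‖y t - p‖) ⁻¹' Ici R := by
      ext t; simp only [hA, mem_sep_iff, mem_inter_iff, mem_preimage, mem_Ici]
    rw [this]
    exact hyc.preimage_isClosed_of_isClosed isClosed_Icc isClosed_Ici
  obtain ⟨T, hTA, hTub⟩ : ∃ T, T ∈ A ∧ ∀ t ∈ A, t ≤ T :=
    ⟨sSup A, hAclosed.csSup_mem hAne hAbdd, fun t ht => le_csSup hAbdd ht⟩
  obtain ⟨⟨hTs₀, hTt₁⟩, hTout⟩ := hTA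
  have hTlt : T < t₁ := lt_of_le_of_ne hTt₁ (by rintro rfl; linarith)
  -- beyond T, the trajectory stays strictly inside the ball
  have hafter : ∀ t ∈ Ioc T t₁, ‖y t - p‖ < R := by
    intro t ht
    by_contra h
    push_neg at h
    have : t ∈ A := ⟨⟨hTs₀.trans ht.1.le, ht.2⟩, h⟩
    exact absurd (hTub t this) (not_le.2 ht.1)
  -- hence the trajectory touches the sphere at T
  have hTnorm : ‖y T - p‖ = R := by
    refine le_antisymm ?_ hTout
    have htend : Filter.Tendsto (fun t => ‖y t - p‖) (nhdsWithin T (Ioi T))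
        (nhds ‖y T - p‖) := by
      apply Filter.Tendsto.mono_left _ nhdsWithin_le_nhds
      exact (((hycont T hTs₀).sub continuousAt_const).norm : ContinuousAt _ T)
    refine le_of_tendsto htend ?_
    filter_upwards [Ioc_mem_nhdsGT_of_mem (⟨le_refl T, hTlt⟩ : T ∈ Ico T t₁)] with t ht
    exact (hafter t ht).le
  -- positive radial velocity at T
  have hD : 0 < (inner ℝ (v T) (y T - p) : ℝ) := key T hTs₀ hTnorm
  -- derivative of the squared distance
  have hdy : HasDerivAt (fun t => y t - p) (v T) T := (hyode T hTs₀).sub_const p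
  have hψ : HasDerivAt (fun t => (inner ℝ (y t - p) (y t - p) : ℝ))
      ((inner ℝ (y T - p) (v T) : ℝ) + (inner ℝ (v T) (y T - p) : ℝ)) T :=
    HasDerivAt.inner ℝ hdy hdy
  have hDpos : 0 < (inner ℝ (y T - p) (v T) : ℝ) + (inner ℝ (v T) (y T - p) : ℝ) := by
    have := real_inner_comm (y T - p) (v T); linarith
  have hslope := hasDerivAt_iff_tendsto_slope.1 hψ
  have hev1 : ∀ᶠ t in nhdsWithin T (Ioi T),
      0 < slope (fun t => (inner ℝ (y t - p) (y t - p) : ℝ)) T t := by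
    apply Filter.Eventually.filter_mono
      (nhdsWithin_mono T (fun x (hx : x ∈ Ioi T) => ne_of_gt (mem_Ioi.1 hx)))
    exact hslope.eventually (eventually_gt_nhds hDpos)
  have hev2 : ∀ᶠ t in nhdsWithin T (Ioi T), t ∈ Ioc T t₁ :=
    Ioc_mem_nhdsGT_of_mem (⟨le_refl T, hTlt⟩ : T ∈ Ico T t₁)
  obtain ⟨t, hst, htIoc⟩ := (hev1.and hev2).exists
  -- slope positive means the squared distance increased, but it must have decreased
  have h1 : (inner ℝ (y T - p) (y T - p) : ℝ) < (inner ℝ (y t - p) (y t - p) : ℝ) := by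
    have hslope_eq : slope (fun t => (inner ℝ (y t - p) (y t - p) : ℝ)) T t
        = (t - T)⁻¹ * ((inner ℝ (y t - p) (y t - p) : ℝ) - (inner ℝ (y T - p) (y T - p) : ℝ)) := by
      simp [slope, vsub_eq_sub, smul_eq_mul]
    rw [hslope_eq] at hst
    have htT : 0 < t - T := sub_pos.2 htIoc.1
    have hmul := mul_pos htT hst
    rw [← mul_assoc, mul_inv_cancel₀ (ne_of_gt htT), one_mul] at hmul
    linarith
  have h2 : (inner ℝ (y t - p) (y t - p) : ℝ) < (inner ℝ (y T - p) (y T - p) : ℝ) := by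
    rw [real_inner_self_eq_norm_sq, real_inner_self_eq_norm_sq, hTnorm]
    have := hafter t htIoc
    nlinarith [norm_nonneg (y t - p)]
  linarith
end
end

section
/- Let F : ℝⁿ → ℝ be twice continuously differentiable and coercive (F(x) → +∞ as ‖x‖ → ∞), let x₀ ∈ ℝⁿ, and let D₁ be the connected component of the sublevel set {x : F(x) ≤ F(x₀)} containing x₀. If every critical point of F in D₁ (i.e., every x ∈ D₁ with ∇F(x) = 0) is a global minimizer of F, then the gradient flow x̃′(s) = −∇F(x̃(s)) with x̃(0) = x₀ is defined for all s ≥ 0, remains in D₁, and converges to the set of global minimizers of F: dist(x̃(s), argmin F) → 0 and F(x̃(s)) → min F as s → ∞. -/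
open Set Filter Metric

noncomputable section

private lemma chainrule {n : ℕ} (F : EuclideanSpace ℝ (Fin n) → ℝ) (hF : ContDiff ℝ 2 F)
    (x : ℝ → EuclideanSpace ℝ (Fin n)) (w : EuclideanSpace ℝ (Fin n)) (s : ℝ)
    (hx : HasDerivAt x w s) :
    HasDerivAt (fun t => F (x t)) (inner ℝ (gradient F (x s)) w : ℝ) s := by
  have hd : DifferentiableAt ℝ F (x s) :=
    (hF.differentiable (by norm_num)).differentiableAt
  exact (hd.hasFDerivAt.comp_hasDerivAt s hx).congr_deriv
    (by rw [gradient, InnerProductSpace.toDual_symm_apply])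

private lemma antitone_helper (φ d : ℝ → ℝ) (hd : ∀ s ∈ Ici (0:ℝ), HasDerivAt φ (d s) s)
    (h : ∀ s ∈ Ici (0:ℝ), d s ≤ 0) : AntitoneOn φ (Ici 0) := by
  apply antitoneOn_of_deriv_nonpos (convex_Ici 0)
  · exact fun s hs => (hd s hs).continuousAt.continuousWithinAt
  · intro s hs
    rw [interior_Ici] at hs
    exact (hd s (mem_Ici.mpr (le_of_lt (mem_Ioi.mp hs)))).differentiableAt.differentiableWithinAt
  · intro s hs
    rw [interior_Ici] at hs
    rw [(hd s (mem_Ici.mpr (le_of_lt (mem_Ioi.mp hs)))).deriv]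
    exact h s (mem_Ici.mpr (le_of_lt (mem_Ioi.mp hs)))

private lemma sublevel_compact {n : ℕ} (F : EuclideanSpace ℝ (Fin n) → ℝ)
    (hFc : Continuous F)
    (hcoercive : Tendsto F (cocompact (EuclideanSpace ℝ (Fin n))) atTop) (c : ℝ) :
    IsCompact {x | F x ≤ c} := by
  have hcl : IsClosed {x | F x ≤ c} := isClosed_le hFc continuous_const
  obtain ⟨S, hS, hSsub⟩ := mem_cocompact.mp (hcoercive.eventually (eventually_gt_atTop c))
  refine hS.of_isClosed_subset hcl fun x hx => ?_
  by_contra hxS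
  have h1 : c < F x := hSsub hxS
  have h2 : F x ≤ c := hx
  linarith

private lemma part1 {n : ℕ} (F : EuclideanSpace ℝ (Fin n) → ℝ)
    (hF : ContDiff ℝ 2 F)
    (hcoercive : Tendsto F (cocompact (EuclideanSpace ℝ (Fin n))) atTop)
    (x₀ : EuclideanSpace ℝ (Fin n)) :
    ∃ xtilde : ℝ → EuclideanSpace ℝ (Fin n),
      xtilde 0 = x₀ ∧
      ∀ s : ℝ, 0 ≤ s → HasDerivAt xtilde (-(gradient F (xtilde s))) s := by
  set K := {x | F x ≤ F x₀} with hK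
  have hKc : IsCompact K := sublevel_compact F hF.continuous hcoercive _
  have hx₀K : x₀ ∈ K := by simp [hK]
  obtain ⟨R, hR0, hRK⟩ := hKc.isBounded.subset_closedBall_lt 0 0
  set c : ContDiffBump (0 : EuclideanSpace ℝ (Fin n)) := ⟨R, R+1, hR0, by linarith⟩ with hc
  set G := gradient F with hG
  have hGc : ContDiff ℝ 1 G := by
    have h1 : ContDiff ℝ 1 (fderiv ℝ F) := hF.fderiv_right (by norm_num)
    exact ((InnerProductSpace.toDual ℝ _).symm.contDiff).comp h1
  set v : EuclideanSpace ℝ (Fin n) → EuclideanSpace ℝ (Fin n) :=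
    fun x => (c x) • (-(G x)) with hv
  have hv1 : ContDiff ℝ 1 v := (c.contDiff).smul hGc.neg
  have hvsupp : HasCompactSupport v :=
    c.hasCompactSupport.mono (fun x hx => Function.support_smul_subset_left (fun x => c x) (fun x => -(G x)) hx)
  obtain ⟨Lip, hLip⟩ := ContDiff.lipschitzWith_of_hasCompactSupport hvsupp hv1 one_ne_zero
  obtain ⟨C0, hC0⟩ := hv1.continuous.bounded_above_of_compact_support hvsupp
  set C := max C0 0 with hCdef
  have hCnn : 0 ≤ C := le_max_right _ _
  have hCb : ∀ x, ‖v x‖ ≤ C := fun x => (hC0 x).trans (le_max_left _ _)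
  -- Picard-Lindelöf on each interval [-1, N+1]
  have hex : ∀ N : ℕ, ∃ f : ℝ → EuclideanSpace ℝ (Fin n), f 0 = x₀ ∧
      ∀ t ∈ Icc (-1:ℝ) (N+1), HasDerivWithinAt f (v (f t)) (Icc (-1:ℝ) (N+1)) t := by
    intro N
    have ht0 : (0:ℝ) ∈ Icc (-1:ℝ) (N+1) :=
      mem_Icc.mpr ⟨by norm_num, by have := Nat.cast_nonneg (α:=ℝ) N; linarith⟩
    have hpl : IsPicardLindelof (fun _ => v) (⟨0, ht0⟩ : Icc (-1:ℝ) (N+1)) x₀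
        ⟨C * (N+1) + 1, by have := mul_nonneg hCnn (by positivity : (0:ℝ) ≤ (N:ℝ)+1); linarith⟩
        0 ⟨C, hCnn⟩ Lip :=
      IsPicardLindelof.of_time_independent (fun x _ => hCb x) hLip.lipschitzOnWith (by
        have := Nat.cast_nonneg (α:=ℝ) N
        simp only [NNReal.coe_zero, sub_zero]
        show C * max ((N:ℝ) + 1) (0 - -1) ≤ C * ((N:ℝ) + 1) + 1
        rw [max_eq_left (by linarith : (0:ℝ) - -1 ≤ (N:ℝ) + 1)]
        linarith)
    exact IsPicardLindelof.exists_eq_forall_mem_Icc_hasDerivWithinAt₀ hpl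
  set sol : ℕ → ℝ → EuclideanSpace ℝ (Fin n) := fun N => (hex N).choose with hsol
  have hsol0 : ∀ N, sol N 0 = x₀ := fun N => (hex N).choose_spec.1
  have hsolW : ∀ N : ℕ, ∀ t ∈ Icc (-1:ℝ) ((N:ℝ)+1),
      HasDerivWithinAt (sol N) (v (sol N t)) (Icc (-1:ℝ) ((N:ℝ)+1)) t :=
    fun N => (hex N).choose_spec.2
  have hsolD : ∀ N : ℕ, ∀ t ∈ Ioo (-1:ℝ) ((N:ℝ)+1), HasDerivAt (sol N) (v (sol N t)) t :=
    fun N t ht => (hsolW N t (Ioo_subset_Icc_self ht)).hasDerivAt (Icc_mem_nhds ht.1 ht.2)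
  have hsolC : ∀ N : ℕ, ContinuousOn (sol N) (Icc (-1:ℝ) ((N:ℝ)+1)) :=
    fun N t ht => (hsolW N t ht).continuousWithinAt
  -- agreement
  have hagree : ∀ N M : ℕ, ∀ t ∈ Icc (-1:ℝ) (min ((N:ℝ)+1) ((M:ℝ)+1)),
      sol N t = sol M t := by
    intro N M
    have h0mem : (0:ℝ) ∈ Ioo (-1:ℝ) (min ((N:ℝ)+1) ((M:ℝ)+1)) :=
      ⟨by norm_num, lt_min (by positivity) (by positivity)⟩
    apply ODE_solution_unique_of_mem_Icc
      (v := fun _ x => v x) (s := fun _ => univ)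
      (fun t _ => hLip.lipschitzOnWith) h0mem
    · exact (hsolC N).mono (Icc_subset_Icc le_rfl (min_le_left _ _))
    · exact fun t ht => hsolD N t ⟨ht.1, lt_of_lt_of_le ht.2 (min_le_left _ _)⟩
    · exact fun t _ => mem_univ _
    · exact (hsolC M).mono (Icc_subset_Icc le_rfl (min_le_right _ _))
    · exact fun t ht => hsolD M t ⟨ht.1, lt_of_lt_of_le ht.2 (min_le_right _ _)⟩
    · exact fun t _ => mem_univ _
    · rw [hsol0, hsol0]
  -- the glued solution
  set xt : ℝ → EuclideanSpace ℝ (Fin n) := fun s => sol ⌈s⌉₊ s with hxt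
  have hxt0 : xt 0 = x₀ := by
    show sol ⌈(0:ℝ)⌉₊ 0 = x₀
    rw [Nat.ceil_zero]
    exact hsol0 0
  -- derivative of xt w.r.t. v
  have hxtD : ∀ s : ℝ, 0 ≤ s → HasDerivAt xt (v (xt s)) s := by
    intro s hs
    set N := ⌈s⌉₊ + 1 with hN
    have hsle : s ≤ (⌈s⌉₊ : ℝ) := Nat.le_ceil s
    have hloc : ∀ t ∈ Ioo (-1:ℝ) (s+1), xt t = sol N t := by
      intro t ht
      have htle : t ≤ (⌈t⌉₊ : ℝ) := Nat.le_ceil t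
      apply hagree ⌈t⌉₊ N t
      refine ⟨le_of_lt ht.1, le_min (by linarith) ?_⟩
      have : (N:ℝ) = (⌈s⌉₊:ℝ) + 1 := by rw [hN]; push_cast; ring
      rw [this]
      have := ht.2
      linarith
    have hnhds : Ioo (-1:ℝ) (s+1) ∈ nhds s := Ioo_mem_nhds (by linarith) (by linarith)
    have heq : xt =ᶠ[nhds s] sol N := eventually_of_mem hnhds hloc
    have hsmem : s ∈ Ioo (-1:ℝ) ((N:ℝ)+1) := by
      constructor
      · linarith
      · have : (N:ℝ) = (⌈s⌉₊:ℝ) + 1 := by rw [hN]; push_cast; ring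
        rw [this]; linarith
    have hd := hsolD N s hsmem
    have hxs : xt s = sol N s := hloc s ⟨by linarith, by linarith⟩
    rw [← hxs] at hd
    exact hd.congr_of_eventuallyEq heq
  -- invariance: xt stays in K, hence v = -gradient there
  have hφ' : ∀ s ∈ Ici (0:ℝ), HasDerivAt (fun t => F (xt t))
      (-((c (xt s)) * ‖G (xt s)‖^2)) s := by
    intro s hs
    have h1 := chainrule F hF xt (v (xt s)) s (hxtD s hs)
    have h2 : (inner ℝ (gradient F (xt s)) (v (xt s)) : ℝ)
        = -((c (xt s)) * ‖G (xt s)‖^2) := by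
      rw [hv]
      simp only [inner_smul_right, inner_neg_right]
      rw [← hG, real_inner_self_eq_norm_sq]
      ring
    rw [h2] at h1
    exact h1
  have hmono : AntitoneOn (fun t => F (xt t)) (Ici 0) := by
    apply antitone_helper _ _ hφ'
    intro s _
    have h1 : 0 ≤ c (xt s) := c.nonneg
    have h2 : 0 ≤ ‖G (xt s)‖^2 := by positivity
    nlinarith
  have hmemK : ∀ s : ℝ, 0 ≤ s → xt s ∈ K := by
    intro s hs
    have h1 := hmono self_mem_Ici hs hs
    have h2 : F (xt 0) = F x₀ := by rw [hxt0]
    have : F (xt s) ≤ F x₀ := by rw [← h2]; exact h1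
    exact this
  -- conclude
  refine ⟨xt, hxt0, fun s hs => ?_⟩
  have hball : xt s ∈ closedBall (0 : EuclideanSpace ℝ (Fin n)) R := hRK (hmemK s hs)
  have hone : c (xt s) = 1 := c.one_of_mem_closedBall hball
  have := hxtD s hs
  rw [hv] at this
  simp only [hone, one_smul] at this
  exact this

private lemma part2 {n : ℕ} (F : EuclideanSpace ℝ (Fin n) → ℝ)
    (hF : ContDiff ℝ 2 F)
    (hcoercive : Tendsto F (cocompact (EuclideanSpace ℝ (Fin n))) atTop)
    (x₀ : EuclideanSpace ℝ (Fin n))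
    (hcrit : ∀ x ∈ connectedComponentIn {x | F x ≤ F x₀} x₀,
      gradient F x = 0 → ∀ z, F x ≤ F z)
    (xtilde : ℝ → EuclideanSpace ℝ (Fin n))
    (h0 : xtilde 0 = x₀)
    (hderiv : ∀ s : ℝ, 0 ≤ s → HasDerivAt xtilde (-(gradient F (xtilde s))) s) :
    (∀ s : ℝ, 0 ≤ s → xtilde s ∈ connectedComponentIn {x | F x ≤ F x₀} x₀) ∧
      Tendsto (fun s => Metric.infDist (xtilde s) {x | ∀ z, F x ≤ F z})
        atTop (nhds 0) ∧
      Tendsto (fun s => F (xtilde s)) atTop (nhds (sInf (Set.range F))) := by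
  set K := {x | F x ≤ F x₀} with hK
  have hKc : IsCompact K := sublevel_compact F (hF.continuous) hcoercive _
  have hx₀K : x₀ ∈ K := by simp [hK]
  set D := connectedComponentIn K x₀ with hD
  have hDK : D ⊆ K := connectedComponentIn_subset _ _
  have hx₀D : x₀ ∈ D := mem_connectedComponentIn hx₀K
  -- D is compact
  have hDc : IsCompact D := by
    rw [hD, connectedComponentIn_eq_image hx₀K]
    haveI : CompactSpace K := isCompact_iff_compactSpace.mp hKc
    exact (isClosed_connectedComponent.isCompact).image continuous_subtype_val
  -- global min
  obtain ⟨p, hp⟩ := hF.continuous.exists_forall_le hcoercive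
  have hm : sInf (Set.range F) = F p := by
    refine le_antisymm (csInf_le ⟨F p, fun y hy => ?_⟩ (mem_range_self p))
      (le_csInf (range_nonempty F) fun y hy => ?_)
    · obtain ⟨z, rfl⟩ := hy; exact hp z
    · obtain ⟨z, rfl⟩ := hy; exact hp z
  set m := F p with hmdef
  have hargmin : ∀ x, (∀ z, F x ≤ F z) ↔ F x = m := by
    intro x
    constructor
    · intro h; exact le_antisymm (h p) (hp x)
    · intro h z; rw [h]; exact hp z
  -- derivative of φ
  set φ : ℝ → ℝ := fun s => F (xtilde s) with hφ
  have hφ' : ∀ s ∈ Ici (0:ℝ), HasDerivAt φ (-‖gradient F (xtilde s)‖^2) s := by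
    intro s hs
    have h1 := chainrule F hF xtilde (-(gradient F (xtilde s))) s (hderiv s hs)
    have h2 : (inner ℝ (gradient F (xtilde s)) (-(gradient F (xtilde s))) : ℝ)
        = -‖gradient F (xtilde s)‖^2 := by
      rw [inner_neg_right, real_inner_self_eq_norm_sq]
    rw [h2] at h1
    exact h1
  have hmono : AntitoneOn φ (Ici 0) :=
    antitone_helper φ _ hφ' (fun s _ => neg_nonpos.mpr (by positivity))
  have hφ0 : φ 0 = F x₀ := by simp only [hφ, h0]
  -- stays in K
  have hmemK : ∀ s : ℝ, 0 ≤ s → xtilde s ∈ K := by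
    intro s hs
    have := hmono (self_mem_Ici) hs hs
    rw [hφ0] at this
    exact this
  -- continuous
  have hcont : ContinuousOn xtilde (Ici 0) :=
    fun s hs => (hderiv s hs).continuousAt.continuousWithinAt
  -- stays in D
  have hmemD : ∀ s : ℝ, 0 ≤ s → xtilde s ∈ D := by
    intro s hs
    have hconn : IsPreconnected (xtilde '' Icc 0 s) :=
      (isPreconnected_Icc).image _ (hcont.mono Icc_subset_Ici_self)
    have hsub : xtilde '' Icc 0 s ⊆ K := by
      rintro _ ⟨t, ht, rfl⟩; exact hmemK t ht.1
    have hx0mem : x₀ ∈ xtilde '' Icc 0 s := ⟨0, ⟨le_refl _, hs⟩, h0⟩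
    exact hconn.subset_connectedComponentIn hx0mem hsub ⟨s, ⟨hs, le_refl _⟩, rfl⟩
  refine ⟨hmemD, ?_⟩
  -- limit of φ
  set ψ : ℝ → ℝ := fun s => φ (max s 0) with hψ
  have hψanti : Antitone ψ := by
    intro s t hst
    exact hmono (le_max_right s 0) (le_max_right t 0) (max_le_max hst (le_refl _))
  have hlow : ∀ s : ℝ, 0 ≤ s → m ≤ φ s := fun s _ => hp _
  have hψbdd : BddBelow (Set.range ψ) := ⟨m, by rintro _ ⟨s, rfl⟩; exact hlow _ (le_max_right _ _)⟩
  have hψtend : Tendsto ψ atTop (nhds (⨅ s, ψ s)) := tendsto_atTop_ciInf hψanti hψbdd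
  set L := ⨅ s, ψ s with hLdef
  have hmL : m ≤ L := le_ciInf fun s => hlow _ (le_max_right _ _)
  have hLle : ∀ s : ℝ, 0 ≤ s → L ≤ φ s := by
    intro s hs
    have h1 : L ≤ ψ s := ciInf_le hψbdd s
    have h2 : ψ s = φ s := by
      show φ (max s 0) = φ s
      rw [max_eq_left hs]
    rw [h2] at h1
    exact h1
  -- L = m
  have hLm : L = m := by
    by_contra hne
    have hmlt : m < L := lt_of_le_of_ne hmL (Ne.symm hne)
    set C := D ∩ {x | L ≤ F x} with hC
    have hCc : IsCompact C := hDc.inter_right (isClosed_le continuous_const hF.continuous)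
    have hCne : C.Nonempty := ⟨x₀, hx₀D, by
      have := hLle 0 (le_refl _); rwa [hφ0] at this⟩
    have hgradne : ∀ x ∈ C, gradient F x ≠ 0 := by
      intro x hx h0'
      have hxm := (hargmin x).mp (hcrit x hx.1 h0')
      have h2 : L ≤ F x := hx.2
      rw [hxm] at h2
      exact absurd h2 (not_le.mpr hmlt)
    have hgradcont : Continuous (gradient F) := by
      have h1 : ContDiff ℝ 1 (fderiv ℝ F) := hF.fderiv_right (by norm_num)
      exact (((InnerProductSpace.toDual ℝ _).symm.contDiff).comp h1).continuous
    obtain ⟨q, hqC, hq⟩ := hCc.exists_isMinOn hCne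
      (continuous_norm.comp hgradcont).continuousOn
    set ε := ‖gradient F q‖ with hε
    have hεpos : 0 < ε := norm_pos_iff.mpr (hgradne q hqC)
    have hCmem : ∀ s : ℝ, 0 ≤ s → xtilde s ∈ C := fun s hs => ⟨hmemD s hs, hLle s hs⟩
    -- linear decrease
    have hlin : AntitoneOn (fun s => φ s + ε^2 * s) (Ici 0) := by
      apply antitone_helper _ (fun s => -‖gradient F (xtilde s)‖^2 + ε^2)
      · intro s hs
        exact (hφ' s hs).add ((hasDerivAt_id s).const_mul (ε^2) |>.congr_deriv (by ring))
      · intro s hs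
        have : ε ≤ ‖gradient F (xtilde s)‖ := hq (hCmem s hs)
        nlinarith [norm_nonneg (gradient F (xtilde s))]
    set T := (F x₀ - m) / ε^2 + 1 with hT
    have hTpos : 0 ≤ T := by
      have h1 : m ≤ F x₀ := hp x₀
      have h2 : 0 < ε^2 := by positivity
      have h3 : 0 ≤ (F x₀ - m) / ε^2 := div_nonneg (by linarith) (le_of_lt h2)
      rw [hT]
      linarith
    have := hlin self_mem_Ici hTpos hTpos
    simp only [mul_zero, add_zero, hφ0] at this
    have hphiT : m ≤ φ T := hlow T hTpos
    have h2 : 0 < ε^2 := by positivity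
    have : φ T ≤ F x₀ - ε^2 * T := by linarith
    rw [hT] at this
    have hexp : ε^2 * ((F x₀ - m) / ε^2 + 1) = (F x₀ - m) + ε^2 := by
      field_simp
    nlinarith
  -- φ tends to m
  have hφtend : Tendsto φ atTop (nhds m) := by
    rw [← hLm]
    refine hψtend.congr' ?_
    filter_upwards [eventually_ge_atTop (0:ℝ)] with s hs
    rw [hψ]
    simp [max_eq_left hs]
  constructor
  · -- infDist tends to 0
    rw [Metric.tendsto_nhds]
    intro ε hε
    set A := {x | ∀ z, F x ≤ F z} with hA
    have hkey : ∀ᶠ s in atTop, Metric.infDist (xtilde s) A < ε := by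
      set Cε := D ∩ {x | ε ≤ Metric.infDist x A} with hCε
      have hCεc : IsCompact Cε :=
        hDc.inter_right (isClosed_le continuous_const (continuous_infDist_pt A))
      rcases eq_empty_or_nonempty Cε with hemp | hne
      · filter_upwards [eventually_ge_atTop (0:ℝ)] with s hs
        by_contra hcon
        push_neg at hcon
        exact eq_empty_iff_forall_notMem.mp hemp (xtilde s)
          (Set.mem_inter (hmemD s hs) hcon)
      · obtain ⟨q, hqC, hq⟩ := hCεc.exists_isMinOn hne hF.continuous.continuousOn
        have hqA : q ∉ A := by
          intro hqA
          have h3 : ε ≤ Metric.infDist q A := hqC.2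
          rw [Metric.infDist_zero_of_mem hqA] at h3
          linarith
        have hqm : m < F q := by
          rcases lt_or_eq_of_le (hp q) with h | h
          · exact h
          · exact absurd ((hargmin q).mpr h.symm) hqA
        have hev : ∀ᶠ s in atTop, φ s < F q :=
          hφtend.eventually (eventually_lt_nhds hqm)
        filter_upwards [hev, eventually_ge_atTop (0:ℝ)] with s hsev hs
        by_contra hcon
        push_neg at hcon
        have h4 : F q ≤ F (xtilde s) := hq (Set.mem_inter (hmemD s hs) hcon)
        have h5 : φ s = F (xtilde s) := rfl
        rw [h5] at hsev
        linarith
    filter_upwards [hkey, eventually_ge_atTop (0:ℝ)] with s hs hs0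
    rw [Real.dist_eq, sub_zero, abs_of_nonneg (Metric.infDist_nonneg)]
    exact hs
  · rw [hm]
    exact hφtend

/-- LaSalle-type step in the proof of Theorem 3: if `F` is twice continuously
differentiable and coercive, and every critical point of `F` in the connected component
`D₁` of the sublevel set `{x : F x ≤ F x₀}` containing `x₀` is a global minimizer of
`F`, then the gradient flow `x̃′(s) = −∇F(x̃(s))`, `x̃(0) = x₀`, is defined for all
`s ≥ 0`, remains in `D₁`, and converges to the set of global minimizers of `F`:
`dist(x̃(s), argmin F) → 0` and `F(x̃(s)) → min F` as `s → ∞`. -/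
theorem gradient_flow_converges_to_global_minimizers
    {n : ℕ} (F : EuclideanSpace ℝ (Fin n) → ℝ)
    (hF : ContDiff ℝ 2 F)
    (hcoercive : Tendsto F (cocompact (EuclideanSpace ℝ (Fin n))) atTop)
    (x₀ : EuclideanSpace ℝ (Fin n))
    (hcrit : ∀ x ∈ connectedComponentIn {x | F x ≤ F x₀} x₀,
      gradient F x = 0 → ∀ z, F x ≤ F z) :
    (∃ xtilde : ℝ → EuclideanSpace ℝ (Fin n),
      xtilde 0 = x₀ ∧
      ∀ s : ℝ, 0 ≤ s → HasDerivAt xtilde (-(gradient F (xtilde s))) s) ∧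
    (∀ xtilde : ℝ → EuclideanSpace ℝ (Fin n),
      xtilde 0 = x₀ →
      (∀ s : ℝ, 0 ≤ s → HasDerivAt xtilde (-(gradient F (xtilde s))) s) →
      (∀ s : ℝ, 0 ≤ s → xtilde s ∈ connectedComponentIn {x | F x ≤ F x₀} x₀) ∧
      Tendsto (fun s => Metric.infDist (xtilde s) {x | ∀ z, F x ≤ F z})
        atTop (nhds 0) ∧
      Tendsto (fun s => F (xtilde s)) atTop (nhds (sInf (Set.range F)))) :=
  ⟨part1 F hF hcoercive x₀,
   fun xtilde h0 hderiv => part2 F hF hcoercive x₀ hcrit xtilde h0 hderiv⟩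
end
end

section
/- Let A ∈ ℝ^{n×n} be symmetric, let J ∈ ℝ^{m×n} have rank m (so JJᵀ is invertible), let α > 0, and set P := I − Jᵀ(JJᵀ)⁻¹J. If wᵀAw > 0 for every nonzero w ∈ ℝⁿ with Jw = 0, then the matrix −(1/α) A P has 0 as an eigenvalue of algebraic multiplicity exactly m, and its remaining n − m eigenvalues (over ℂ, counted with multiplicity) all have negative real part. -/
open Matrix Polynomial

noncomputable section

section Aux

variable {ι : Type*} [Fintype ι] [DecidableEq ι] {R : Type*} [CommRing R]

lemma my_charpoly_conj (U V M : Matrix ι ι R) (hUV : U * V = 1) :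
    (U * M * V).charpoly = M.charpoly := by
  have hc : charmatrix (U * M * V) =
      (U.map C) * charmatrix M * (V.map C) := by
    simp only [charmatrix, RingHom.mapMatrix_apply]
    rw [mul_sub, sub_mul]
    congr 1
    · rw [← (scalar_commute (X : R[X]) (Commute.all _) (U.map C)).eq, mul_assoc,
        ← Matrix.map_mul, hUV]
      simp
    · simp [Matrix.map_mul]
  rw [charpoly, hc, det_mul, det_mul, charpoly, mul_assoc, mul_comm (charmatrix M).det,
    ← mul_assoc, ← det_mul, ← Matrix.map_mul, hUV]
  simp

lemma my_charpoly_diagonal (d : ι → R) :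
    (diagonal d).charpoly = ∏ i, (X - C (d i)) := by
  rw [charpoly]
  have : charmatrix (diagonal d) = diagonal (fun i => X - C (d i)) := by
    ext i j
    rcases eq_or_ne i j with rfl | h
    · simp
    · simp [h, diagonal_apply_ne _ h]
  rw [this, det_diagonal]

lemma my_charpoly_mul_comm [IsDomain R] (A B : Matrix ι ι R) :
    (A * B).charpoly = (B * A).charpoly := by
  have key : (fromBlocks 1 A 0 1 * fromBlocks 0 0 B (B * A) * fromBlocks 1 (-A) 0 1 :
      Matrix (ι ⊕ ι) (ι ⊕ ι) R) = fromBlocks (A * B) 0 B 0 := by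
    simp [fromBlocks_multiply, Matrix.mul_assoc]
  have hUV : (fromBlocks 1 A 0 1 * fromBlocks 1 (-A) 0 1 : Matrix (ι ⊕ ι) (ι ⊕ ι) R) = 1 := by
    simp [fromBlocks_multiply, ← fromBlocks_one]
  have h1 := my_charpoly_conj _ _ (fromBlocks 0 0 B (B * A)) hUV
  rw [key] at h1
  rw [charpoly_fromBlocks_zero₁₂, charpoly_fromBlocks_zero₁₂] at h1
  have h0 : (0 : Matrix ι ι R).charpoly ≠ 0 := (charpoly_monic _).ne_zero
  rw [mul_comm ((0 : Matrix ι ι R).charpoly)] at h1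
  exact (mul_right_cancel₀ h0 h1.symm).symm

end Aux

/-- Eigenvalue statement of Theorem 5: if `A` is symmetric, `J` has full row rank `m`,
`P = I − Jᵀ(JJᵀ)⁻¹J`, and `wᵀAw > 0` for every nonzero `w` with `Jw = 0`, then the
matrix `−(1/α)AP` has `0` as an eigenvalue of algebraic multiplicity exactly `m`, and
its remaining `n − m` complex eigenvalues all have negative real part. -/
theorem eigenvalues_of_minus_AP
    {n m : ℕ} (A : Matrix (Fin n) (Fin n) ℝ) (hA : A.IsSymm)
    (J : Matrix (Fin m) (Fin n) ℝ) (hJ : J.rank = m)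
    (α : ℝ) (hα : 0 < α)
    (P : Matrix (Fin n) (Fin n) ℝ) (hP : P = 1 - Jᵀ * (J * Jᵀ)⁻¹ * J)
    (hpos : ∀ w : Fin n → ℝ, w ≠ 0 → J.mulVec w = 0 → 0 < w ⬝ᵥ A.mulVec w) :
    Polynomial.rootMultiplicity 0
        (((-(1 / α)) • (A * P)).map (algebraMap ℝ ℂ)).charpoly = m ∧
    ∀ z : ℂ, (((-(1 / α)) • (A * P)).map (algebraMap ℝ ℂ)).charpoly.IsRoot z →
      z ≠ 0 → z.re < 0 := by
  set c : ℝ := -(1 / α) with hc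
  have hcneg : c < 0 := by
    rw [hc]; simp; positivity
  have hcne : c ≠ 0 := ne_of_lt hcneg
  set K : Matrix (Fin m) (Fin m) ℝ := (J * Jᵀ)⁻¹ with hK
  -- J transpose has injective mulVec
  have hJt_rank : Jᵀ.rank = m := by rw [J.rank_transpose, hJ]
  have hJt_ker : LinearMap.ker Jᵀ.mulVecLin = ⊥ := by
    have h := Jᵀ.mulVecLin.finrank_range_add_finrank_ker
    have hr : Module.finrank ℝ (LinearMap.range Jᵀ.mulVecLin) = m := hJt_rank
    rw [hr, Module.finrank_pi, Fintype.card_fin] at h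
    exact Submodule.finrank_eq_zero.mp (by omega)
  have hJt_inj : Function.Injective Jᵀ.mulVec := by
    have := LinearMap.ker_eq_bot.mp hJt_ker
    exact this
  -- J * Jᵀ is invertible
  have hJJt : IsUnit (J * Jᵀ) := by
    rw [← mulVec_injective_iff_isUnit]
    intro x y hxy
    apply hJt_inj
    have h0 : J *ᵥ (Jᵀ *ᵥ (x - y)) = 0 := by
      rw [Matrix.mulVec_mulVec, Matrix.mulVec_sub, hxy, sub_self]
    have h1 : (Jᵀ *ᵥ (x - y)) ⬝ᵥ (Jᵀ *ᵥ (x - y)) = 0 := by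
      nth_rewrite 1 [Matrix.mulVec_transpose]
      rw [← Matrix.dotProduct_mulVec, h0, dotProduct_zero]
    have h2 := dotProduct_self_eq_zero.mp h1
    rw [Matrix.mulVec_sub, sub_eq_zero] at h2
    exact h2
  have hdet : IsUnit (J * Jᵀ).det := (isUnit_iff_isUnit_det _).mp hJJt
  have hJJK : (J * Jᵀ) * K = 1 := Matrix.mul_nonsing_inv _ hdet
  have hKJJ : K * (J * Jᵀ) = 1 := Matrix.nonsing_inv_mul _ hdet
  -- basic algebra of P
  have hJP : J * P = 0 := by
    rw [hP, Matrix.mul_sub, Matrix.mul_one, show J * (Jᵀ * K * J) = ((J * Jᵀ) * K) * J by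
      simp only [hK, Matrix.mul_assoc], hJJK, Matrix.one_mul, sub_self]
  have hPt : Pᵀ = P := by
    rw [hP, hK]
    simp only [transpose_sub, transpose_one, transpose_mul, transpose_transpose,
      transpose_nonsing_inv]
    rw [← Matrix.mul_assoc]
  have hPJt : P * Jᵀ = 0 := by
    have := congrArg transpose hJP
    rw [transpose_mul, hPt, transpose_zero] at this
    exact this
  have hPP : P * P = P := by
    nth_rewrite 2 [hP]
    rw [Matrix.mul_sub, Matrix.mul_one, show P * (Jᵀ * K * J) = ((P * Jᵀ) * K) * J by
      simp only [hK, Matrix.mul_assoc], hPJt, Matrix.zero_mul, Matrix.zero_mul, sub_zero]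
  -- the symmetric surrogate S
  set T : Matrix (Fin n) (Fin n) ℝ := P * (A * P) with hT
  set S : Matrix (Fin n) (Fin n) ℝ := c • T with hS
  have hchar : (c • (A * P)).charpoly = S.charpoly := by
    have h1 : (c • (A * P)) = (c • (A * P)) * P := by
      rw [smul_mul_assoc, Matrix.mul_assoc, hPP]
    rw [h1, my_charpoly_mul_comm, mul_smul_comm]
  have hSsymm : S.IsHermitian := by
    rw [Matrix.IsHermitian, conjTranspose_eq_transpose_of_trivial, hS, transpose_smul, hT]
    congr 1
    rw [transpose_mul, transpose_mul, hPt, hA.eq, Matrix.mul_assoc]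
  -- dot product identity : x ⬝ᵥ T x = (P x) ⬝ᵥ A (P x)
  have hdot : ∀ x : Fin n → ℝ, x ⬝ᵥ (T *ᵥ x) = (P *ᵥ x) ⬝ᵥ (A *ᵥ (P *ᵥ x)) := by
    intro x
    rw [hT, ← Matrix.mulVec_mulVec, ← Matrix.mulVec_mulVec, Matrix.dotProduct_mulVec, ← hPt,
      Matrix.vecMul_transpose, hPt]
  -- kernel of T is the range of Jᵀ
  have hker : LinearMap.ker T.mulVecLin = LinearMap.range Jᵀ.mulVecLin := by
    apply le_antisymm
    · intro x hx
      rw [LinearMap.mem_ker, Matrix.mulVecLin_apply] at hx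
      have hw : P *ᵥ x = 0 := by
        by_contra hwne
        have hJw : J *ᵥ (P *ᵥ x) = 0 := by
          rw [Matrix.mulVec_mulVec, hJP, Matrix.zero_mulVec]
        have := hpos _ hwne hJw
        rw [← hdot x, hx, dotProduct_zero] at this
        exact lt_irrefl 0 this
      refine ⟨(K * J) *ᵥ x, ?_⟩
      rw [Matrix.mulVecLin_apply, Matrix.mulVec_mulVec, ← Matrix.mul_assoc]
      have hx2 : (1 - Jᵀ * K * J) *ᵥ x = 0 := by
        rw [← hP]  -- careful : hP : P = 1 - Jᵀ * (J*Jᵀ)⁻¹ * J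
        exact hw
      have := congrArg (fun v => x - v) hx2
      simp only [Matrix.sub_mulVec, Matrix.one_mulVec, sub_zero, sub_sub_cancel] at this
      exact this
    · rintro x ⟨y, rfl⟩
      simp only [LinearMap.mem_ker, Matrix.mulVecLin_apply, Matrix.mulVec_mulVec]
      rw [show T * Jᵀ = 0 by
          rw [hT, Matrix.mul_assoc, Matrix.mul_assoc, hPJt, Matrix.mul_zero, Matrix.mul_zero],
        Matrix.zero_mulVec]
  -- rank of S
  have hm_le : m ≤ n := by
    have := J.rank_le_card_width
    rwa [hJ, Fintype.card_fin] at this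
  have hTrank : T.rank = n - m := by
    have h := T.mulVecLin.finrank_range_add_finrank_ker
    rw [hker] at h
    have h2 : Module.finrank ℝ (LinearMap.range Jᵀ.mulVecLin) = m := hJt_rank
    rw [h2, Module.finrank_pi, Fintype.card_fin] at h
    have : T.rank = Module.finrank ℝ (LinearMap.range T.mulVecLin) := rfl
    omega
  have hSrank : S.rank = n - m := by
    have h1 : S = (c • (1 : Matrix (Fin n) (Fin n) ℝ)) * T := by
      rw [smul_mul_assoc, one_mul, hS]
    have hdet1 : IsUnit (c • (1 : Matrix (Fin n) (Fin n) ℝ)).det := by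
      rw [det_smul, det_one, mul_one]
      exact (pow_ne_zero _ hcne).isUnit
    rw [h1, Matrix.rank_mul_eq_right_of_isUnit_det _ _ hdet1, hTrank]
  -- eigenvalue negativity
  have heig : ∀ i : Fin n, hSsymm.eigenvalues i ≠ 0 → hSsymm.eigenvalues i < 0 := by
    intro i hne
    set v : Fin n → ℝ := ⇑(hSsymm.eigenvectorBasis i) with hv
    have hvne : v ≠ 0 := by
      intro h
      have : hSsymm.eigenvectorBasis i = 0 := by
        ext j; exact congrFun h j
      exact hSsymm.eigenvectorBasis.orthonormal.ne_zero i this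
    have hmul : S *ᵥ v = hSsymm.eigenvalues i • v := hSsymm.mulVec_eigenvectorBasis i
    rcases eq_or_ne (P *ᵥ v) 0 with hw | hw
    · exfalso
      have h0 : S *ᵥ v = 0 := by
        rw [hS, hT, Matrix.smul_mulVec, ← Matrix.mulVec_mulVec, ← Matrix.mulVec_mulVec,
          hw, Matrix.mulVec_zero, Matrix.mulVec_zero, smul_zero]
      rw [h0] at hmul
      rcases smul_eq_zero.mp hmul.symm with h | h
      · exact hne h
      · exact hvne h
    · have hJw : J *ᵥ (P *ᵥ v) = 0 := by
        rw [Matrix.mulVec_mulVec, hJP, Matrix.zero_mulVec]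
      have hposw := hpos _ hw hJw
      have hvv : 0 < v ⬝ᵥ v := by
        have hnn : 0 ≤ v ⬝ᵥ v := by
          simpa [star_trivial] using dotProduct_self_star_nonneg v
        rcases hnn.lt_or_eq with h | h
        · exact h
        · exact absurd (dotProduct_self_eq_zero.mp h.symm) hvne
      have hcomp : hSsymm.eigenvalues i * (v ⬝ᵥ v) = c * ((P *ᵥ v) ⬝ᵥ (A *ᵥ (P *ᵥ v))) := by
        have h1 : v ⬝ᵥ (S *ᵥ v) = hSsymm.eigenvalues i * (v ⬝ᵥ v) := by
          rw [hmul, dotProduct_smul, smul_eq_mul]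
        have h2 : v ⬝ᵥ (S *ᵥ v) = c * ((P *ᵥ v) ⬝ᵥ (A *ᵥ (P *ᵥ v))) := by
          rw [hS, Matrix.smul_mulVec, dotProduct_smul, smul_eq_mul, hdot]
        rw [← h1, h2]
      have hlt : hSsymm.eigenvalues i * (v ⬝ᵥ v) < 0 := by
        rw [hcomp]
        exact mul_neg_of_neg_of_pos hcneg hposw
      by_contra hge
      push_neg at hge
      exact absurd hlt (not_lt.mpr (mul_nonneg hge (le_of_lt hvv)))
  -- eigenvalue zero count
  have hcard_ne : Fintype.card {i // hSsymm.eigenvalues i ≠ 0} = n - m := by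
    rw [← hSsymm.rank_eq_card_non_zero_eigs, hSrank]
  have hcard_eq : Fintype.card {i // hSsymm.eigenvalues i = 0} = m := by
    have h := Fintype.card_subtype_compl (fun i => hSsymm.eigenvalues i = 0)
    have hle : Fintype.card {i // hSsymm.eigenvalues i = 0} ≤ n := by
      simpa using Fintype.card_subtype_le (fun i => hSsymm.eigenvalues i = 0)
    rw [Fintype.card_fin] at h
    rw [hcard_ne] at h
    omega
  -- charpoly over ℂ
  set p : Polynomial ℂ := ((c • (A * P)).map (algebraMap ℝ ℂ)).charpoly with hp
  have hpoly : p = ∏ i, (X - Polynomial.C ((hSsymm.eigenvalues i : ℝ) : ℂ)) := by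
    rw [hp, Matrix.charpoly_map, hchar]
    have hU : ((hSsymm.eigenvectorUnitary : Matrix (Fin n) (Fin n) ℝ)) *
        (star (hSsymm.eigenvectorUnitary : Matrix (Fin n) (Fin n) ℝ)) = 1 :=
      (Matrix.mem_unitaryGroup_iff).mp (hSsymm.eigenvectorUnitary).2
    have hcS : S.charpoly = ∏ i, (X - Polynomial.C (hSsymm.eigenvalues i)) := by
      conv_lhs => rw [hSsymm.spectral_theorem]
      simp only [Unitary.conjStarAlgAut_apply, Unitary.coe_star]
      rw [my_charpoly_conj _ _ _ hU]
      rw [show (RCLike.ofReal ∘ hSsymm.eigenvalues : Fin n → ℝ) = hSsymm.eigenvalues by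
        funext i; simp, my_charpoly_diagonal]
    rw [hcS, Polynomial.map_prod]
    congr 1
    funext i
    rw [Polynomial.map_sub, Polynomial.map_X, Polynomial.map_C]
    rfl
  have hroots : p.roots = (Finset.univ.val.map (fun i => ((hSsymm.eigenvalues i : ℝ) : ℂ))) := by
    rw [hpoly, Finset.prod_eq_multiset_prod,
      show Finset.univ.val.map (fun i => X - Polynomial.C ((hSsymm.eigenvalues i : ℝ) : ℂ)) =
        (Finset.univ.val.map (fun i => ((hSsymm.eigenvalues i : ℝ) : ℂ))).map
          (fun a => X - Polynomial.C a) by rw [Multiset.map_map]; rfl]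
    exact roots_multiset_prod_X_sub_C _
  have hpne : p ≠ 0 := (Matrix.charpoly_monic _).ne_zero
  constructor
  · rw [← Polynomial.count_roots, hroots, Multiset.count_map, ← hcard_eq, Fintype.card_subtype,
      Finset.card_def, Finset.filter_val]
    congr 1
    apply Multiset.filter_congr
    intro i _
    constructor
    · intro h
      exact_mod_cast h.symm
    · intro h
      rw [h]
      simp
  · intro z hz hzne
    have hzmem : z ∈ p.roots := by
      rw [Polynomial.mem_roots hpne]
      exact hz
    rw [hroots, Multiset.mem_map] at hzmem
    obtain ⟨i, _, hi⟩ := hzmem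
    have hne : hSsymm.eigenvalues i ≠ 0 := by
      intro h
      rw [h] at hi
      simp at hi
      exact hzne hi.symm
    have := heig i hne
    rw [← hi]
    simpa using this
end
end

section
/- Let h : ℝⁿ → ℝᵐ be twice continuously differentiable with Jacobian J(x) ∈ ℝ^{m×n}, let z ∈ ℝⁿ be such that J(z)J(z)ᵀ is invertible, and let v ∈ ℝᵐ and e ∈ ℝⁿ. Let M ∈ ℝ^{m×n} be the directional derivative of x ↦ J(x) at z in direction e. Then the directional derivative at z in direction e of the map x ↦ J(x)ᵀ(J(x)J(x)ᵀ)⁻¹ v equals P(z) Mᵀ (J(z)J(z)ᵀ)⁻¹ v − Q(z) M Q(z) v, where Q(z) := J(z)ᵀ(J(z)J(z)ᵀ)⁻¹ and P(z) := I − Q(z)J(z). -/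
open Set Matrix

noncomputable section

/-- Jacobian matrix of the constraint map `h` (rows are the gradients `∇hᵢ(x)ᵀ`). -/
def jac {n m : ℕ} (h : (Fin n → ℝ) → Fin m → ℝ) (x : Fin n → ℝ) :
    Matrix (Fin m) (Fin n) ℝ :=
  Matrix.of fun i j => fderiv ℝ (fun y => h y i) x (Pi.single j 1)

/-- The matrix `Q(x) = J(x)ᵀ(J(x)J(x)ᵀ)⁻¹`. -/
def qMat {n m : ℕ} (h : (Fin n → ℝ) → Fin m → ℝ) (x : Fin n → ℝ) :
    Matrix (Fin n) (Fin m) ℝ :=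
  (jac h x)ᵀ * (jac h x * (jac h x)ᵀ)⁻¹

/-- The projection matrix `P(x) = I − Q(x)J(x)`. -/
def projMat {n m : ℕ} (h : (Fin n → ℝ) → Fin m → ℝ) (x : Fin n → ℝ) :
    Matrix (Fin n) (Fin n) ℝ :=
  1 - qMat h x * jac h x

section helpers
variable {p : ℕ} {z e : Fin p → ℝ}

lemma diff_prod {ι : Type*} [DecidableEq ι] {u : Finset ι} {f : ι → (Fin p → ℝ) → ℝ}
    (hf : ∀ i ∈ u, DifferentiableAt ℝ (f i) z) :
    DifferentiableAt ℝ (fun x => ∏ i ∈ u, f i x) z :=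
  (HasFDerivAt.finset_prod (fun i hi => (hf i hi).hasFDerivAt)).differentiableAt

lemma diff_det {a : Type*} [Fintype a] [DecidableEq a]
    {A : (Fin p → ℝ) → Matrix a a ℝ}
    (hA : ∀ i j, DifferentiableAt ℝ (fun x => A x i j) z) :
    DifferentiableAt ℝ (fun x => (A x).det) z := by
  simp only [Matrix.det_apply']
  apply DifferentiableAt.fun_sum
  intro σ _
  exact (differentiableAt_const _).fun_mul (diff_prod (fun i _ => hA (σ i) i))

lemma diff_adj {a : Type*} [Fintype a] [DecidableEq a]
    {A : (Fin p → ℝ) → Matrix a a ℝ}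
    (hA : ∀ i j, DifferentiableAt ℝ (fun x => A x i j) z) (i j : a) :
    DifferentiableAt ℝ (fun x => (A x).adjugate i j) z := by
  simp only [Matrix.adjugate_apply]
  apply diff_det
  intro k l
  simp only [Matrix.updateRow_apply]
  by_cases hk : k = j <;> simp [hk, hA]

lemma diff_inv {a : Type*} [Fintype a] [DecidableEq a]
    {A : (Fin p → ℝ) → Matrix a a ℝ}
    (hA : ∀ i j, DifferentiableAt ℝ (fun x => A x i j) z)
    (hdet : (A z).det ≠ 0) (i j : a) :
    DifferentiableAt ℝ (fun x => (A x)⁻¹ i j) z := by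
  simp only [Matrix.inv_def, Ring.inverse_eq_inv', Matrix.smul_apply, smul_eq_mul]
  exact ((diff_det hA).inv hdet).mul (diff_adj hA i j)

lemma Dmul {f g : (Fin p → ℝ) → ℝ} (hf : DifferentiableAt ℝ f z)
    (hg : DifferentiableAt ℝ g z) :
    fderiv ℝ (fun x => f x * g x) z e =
      fderiv ℝ f z e * g z + f z * fderiv ℝ g z e := by
  rw [fderiv_fun_mul hf hg]
  simp [mul_comm, add_comm]

lemma Dsum {ι : Type*} {u : Finset ι} {f : ι → (Fin p → ℝ) → ℝ}
    (hf : ∀ i ∈ u, DifferentiableAt ℝ (f i) z) :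
    fderiv ℝ (fun x => ∑ i ∈ u, f i x) z e = ∑ i ∈ u, fderiv ℝ (f i) z e := by
  rw [fderiv_fun_sum hf]; simp

lemma diff_mul_entry {a b c : Type*} [Fintype a] [Fintype b] [Fintype c]
    {A : (Fin p → ℝ) → Matrix a b ℝ} {B : (Fin p → ℝ) → Matrix b c ℝ}
    (hA : ∀ i j, DifferentiableAt ℝ (fun x => A x i j) z)
    (hB : ∀ j k, DifferentiableAt ℝ (fun x => B x j k) z)
    (i : a) (k : c) :
    DifferentiableAt ℝ (fun x => (A x * B x) i k) z := by
  simp only [Matrix.mul_apply]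
  exact DifferentiableAt.fun_sum fun j _ => (hA i j).fun_mul (hB j k)

lemma fderiv_mul_entry {a b c : Type*} [Fintype a] [Fintype b] [Fintype c]
    {A : (Fin p → ℝ) → Matrix a b ℝ} {B : (Fin p → ℝ) → Matrix b c ℝ}
    (hA : ∀ i j, DifferentiableAt ℝ (fun x => A x i j) z)
    (hB : ∀ j k, DifferentiableAt ℝ (fun x => B x j k) z)
    (i : a) (k : c) :
    fderiv ℝ (fun x => (A x * B x) i k) z e =
      ∑ j, (fderiv ℝ (fun x => A x i j) z e * B z j k
        + A z i j * fderiv ℝ (fun x => B x j k) z e) := by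
  have hfun : (fun x => (A x * B x) i k) = fun x => ∑ j, A x i j * B x j k := by
    funext x; simp [Matrix.mul_apply]
  rw [hfun, Dsum (fun j _ => (hA i j).fun_mul (hB j k))]
  exact Finset.sum_congr rfl fun j _ => Dmul (hA i j) (hB j k)

end helpers

/-- Differentiation of `x ↦ J(x)ᵀ(J(x)J(x)ᵀ)⁻¹v` at `z` in direction `e`: it equals
`P(z)Mᵀ(J(z)J(z)ᵀ)⁻¹v − Q(z)MQ(z)v`, where `M` is the directional derivative of
`x ↦ J(x)` at `z` in direction `e`. -/
theorem directional_derivative_of_Q_applied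
    {n m : ℕ} (h : (Fin n → ℝ) → Fin m → ℝ) (hh : ContDiff ℝ 2 h)
    (z : Fin n → ℝ) (hinv : IsUnit (jac h z * (jac h z)ᵀ))
    (v : Fin m → ℝ) (e : Fin n → ℝ)
    (M : Matrix (Fin m) (Fin n) ℝ)
    (hM : ∀ i k, M i k = fderiv ℝ (fun x => jac h x i k) z e) :
    DifferentiableAt ℝ (fun x => (qMat h x).mulVec v) z ∧
    fderiv ℝ (fun x => (qMat h x).mulVec v) z e =
      (projMat h z * Mᵀ * (jac h z * (jac h z)ᵀ)⁻¹).mulVec v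
        - (qMat h z * M * qMat h z).mulVec v := by
  classical
  -- differentiability of the Jacobian entries
  have hjC1 : ∀ i k, ContDiff ℝ 1 fun x => jac h x i k := by
    intro i k
    have h2 : ContDiff ℝ 2 fun y => h y i := contDiff_pi.mp hh i
    have h1 : ContDiff ℝ 1 fun x => fderiv ℝ (fun y => h y i) x :=
      h2.fderiv_right (le_refl 2)
    exact h1.clm_apply contDiff_const
  have hjd : ∀ i k, DifferentiableAt ℝ (fun x => jac h x i k) z :=
    fun i k => ((hjC1 i k).differentiable one_ne_zero).differentiableAt
  have hjtd : ∀ (k : Fin n) (i : Fin m),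
      DifferentiableAt ℝ (fun x => (jac h x)ᵀ k i) z := fun k i => hjd i k
  -- S and its entries
  have hSd : ∀ a b, DifferentiableAt ℝ
      (fun x => (jac h x * (jac h x)ᵀ) a b) z :=
    fun a b => diff_mul_entry hjd hjtd a b
  have hdet : (jac h z * (jac h z)ᵀ).det ≠ 0 := by
    have := (Matrix.isUnit_iff_isUnit_det _).mp hinv
    exact this.ne_zero
  have hdetU : IsUnit (jac h z * (jac h z)ᵀ).det := isUnit_iff_ne_zero.mpr hdet
  have hNd : ∀ a b, DifferentiableAt ℝ
      (fun x => (jac h x * (jac h x)ᵀ)⁻¹ a b) z :=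
    fun a b => diff_inv hSd hdet a b
  -- derivative matrices
  set S' : Matrix (Fin m) (Fin m) ℝ :=
    Matrix.of (fun a b => fderiv ℝ (fun x => (jac h x * (jac h x)ᵀ) a b) z e) with hS'
  set N' : Matrix (Fin m) (Fin m) ℝ :=
    Matrix.of (fun a b => fderiv ℝ (fun x => (jac h x * (jac h x)ᵀ)⁻¹ a b) z e) with hN'
  -- S' = M Jᵀ + J Mᵀ
  have hS'eq : S' = M * (jac h z)ᵀ + jac h z * Mᵀ := by
    ext a b
    rw [hS']
    simp only [Matrix.of_apply]
    rw [fderiv_mul_entry (e := e) hjd hjtd a b]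
    simp only [Matrix.add_apply, Matrix.mul_apply, Matrix.transpose_apply, hM,
      Finset.sum_add_distrib]
  -- eventual identity S x * N x = 1
  have hevdet : ∀ᶠ x in nhds z, (jac h x * (jac h x)ᵀ).det ≠ 0 := by
    have hc : ContinuousAt (fun x => (jac h x * (jac h x)ᵀ).det) z :=
      (diff_det hSd).continuousAt
    exact hc.eventually_ne hdet
  have hev : ∀ᶠ x in nhds z,
      (jac h x * (jac h x)ᵀ) * (jac h x * (jac h x)ᵀ)⁻¹ = 1 := by
    filter_upwards [hevdet] with x hx
    exact Matrix.mul_nonsing_inv _ (isUnit_iff_ne_zero.mpr hx)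
  -- key identity S' Nz + Sz N' = 0
  have hkey : S' * (jac h z * (jac h z)ᵀ)⁻¹ + (jac h z * (jac h z)ᵀ) * N' = 0 := by
    ext a b
    have hfe : (fun x => ((jac h x * (jac h x)ᵀ) * (jac h x * (jac h x)ᵀ)⁻¹) a b)
        =ᶠ[nhds z] fun _ => (1 : Matrix (Fin m) (Fin m) ℝ) a b := by
      filter_upwards [hev] with x hx
      rw [hx]
    have h0 : fderiv ℝ
        (fun x => ((jac h x * (jac h x)ᵀ) * (jac h x * (jac h x)ᵀ)⁻¹) a b) z e = 0 := by
      rw [hfe.fderiv_eq]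
      simp
    rw [fderiv_mul_entry (e := e) hSd hNd a b] at h0
    simp only [Matrix.add_apply, Matrix.mul_apply, Matrix.zero_apply, hS', hN',
      Matrix.of_apply]
    rw [← Finset.sum_add_distrib]
    exact h0
  -- solve for N'
  have hNS : (jac h z * (jac h z)ᵀ)⁻¹ * (jac h z * (jac h z)ᵀ) = 1 :=
    Matrix.nonsing_inv_mul _ hdetU
  have hN'eq : N' = -((jac h z * (jac h z)ᵀ)⁻¹ * S' * (jac h z * (jac h z)ᵀ)⁻¹) := by
    have h1 : (jac h z * (jac h z)ᵀ) * N' = -(S' * (jac h z * (jac h z)ᵀ)⁻¹) :=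
      eq_neg_of_add_eq_zero_right hkey
    calc N' = 1 * N' := by rw [Matrix.one_mul]
      _ = (jac h z * (jac h z)ᵀ)⁻¹ * (jac h z * (jac h z)ᵀ) * N' := by rw [hNS]
      _ = (jac h z * (jac h z)ᵀ)⁻¹ * ((jac h z * (jac h z)ᵀ) * N') := by
          rw [Matrix.mul_assoc]
      _ = (jac h z * (jac h z)ᵀ)⁻¹ * (-(S' * (jac h z * (jac h z)ᵀ)⁻¹)) := by rw [h1]
      _ = -((jac h z * (jac h z)ᵀ)⁻¹ * S' * (jac h z * (jac h z)ᵀ)⁻¹) := by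
          rw [Matrix.mul_neg, Matrix.mul_assoc]
  -- componentwise functions
  have hcompfun : ∀ k, (fun x => (qMat h x).mulVec v k)
      = fun x => ∑ i, ((jac h x)ᵀ * (jac h x * (jac h x)ᵀ)⁻¹) k i * v i := by
    intro k
    funext x
    simp [qMat, Matrix.mulVec, dotProduct]
  have hQd : ∀ (k : Fin n) (i : Fin m), DifferentiableAt ℝ
      (fun x => ((jac h x)ᵀ * (jac h x * (jac h x)ᵀ)⁻¹) k i) z :=
    fun k i => diff_mul_entry hjtd hNd k i
  have hcompd : ∀ k, DifferentiableAt ℝ (fun x => (qMat h x).mulVec v k) z := by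
    intro k
    rw [hcompfun k]
    exact DifferentiableAt.fun_sum fun i _ => (hQd k i).fun_mul (differentiableAt_const _)
  have hdiff : DifferentiableAt ℝ (fun x => (qMat h x).mulVec v) z :=
    differentiableAt_pi.mpr hcompd
  refine ⟨hdiff, ?_⟩
  -- the matrix identity
  have hq : qMat h z = (jac h z)ᵀ * (jac h z * (jac h z)ᵀ)⁻¹ := rfl
  have hmatid : projMat h z * Mᵀ * (jac h z * (jac h z)ᵀ)⁻¹ - qMat h z * M * qMat h z
      = Mᵀ * (jac h z * (jac h z)ᵀ)⁻¹ + (jac h z)ᵀ * N' := by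
    rw [hN'eq, hS'eq, projMat, hq]
    simp only [Matrix.sub_mul, Matrix.one_mul, Matrix.mul_neg, Matrix.neg_mul,
      Matrix.mul_add, Matrix.add_mul, Matrix.mul_assoc]
    abel
  -- compute the derivative componentwise
  have hterm : ∀ (k : Fin n) (i : Fin m),
      fderiv ℝ (fun x => ((jac h x)ᵀ * (jac h x * (jac h x)ᵀ)⁻¹) k i * v i) z e
      = (Mᵀ * (jac h z * (jac h z)ᵀ)⁻¹ + (jac h z)ᵀ * N') k i * v i := by
    intro k i
    rw [Dmul (hQd k i) (differentiableAt_const (v i))]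
    rw [fderiv_mul_entry (e := e) hjtd hNd k i]
    simp only [fderiv_const_apply, ContinuousLinearMap.zero_apply, Pi.zero_apply, mul_zero,
      add_zero]
    simp only [Matrix.add_apply, Matrix.mul_apply, Matrix.transpose_apply, hM, hN',
      Matrix.of_apply, Finset.sum_add_distrib]
  rw [fderiv_pi hcompd]
  funext k
  rw [ContinuousLinearMap.pi_apply]
  rw [hcompfun k,
    Dsum (fun i _ => (hQd k i).fun_mul (differentiableAt_const _))]
  have hrhs : ((projMat h z * Mᵀ * (jac h z * (jac h z)ᵀ)⁻¹).mulVec v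
      - (qMat h z * M * qMat h z).mulVec v) k
      = ((Mᵀ * (jac h z * (jac h z)ᵀ)⁻¹ + (jac h z)ᵀ * N').mulVec v) k := by
    rw [← Matrix.sub_mulVec, hmatid]
  rw [hrhs]
  simp only [Matrix.mulVec, dotProduct]
  exact Finset.sum_congr rfl fun i _ => hterm k i
end
end
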